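/- arXiv:2107.04872 — 5 statements merged into one kernel-verified Lean document; each statement's English description precedes it below -/
import Mathlib

section
/- The sum over k from 1 to N of k times the Narayana number T(N,k) = (1/k) * binomial(N-1, k-1) * binomial(N, k-1) equals (2N-1) * C_{N-1}, where C_{N-1} is the (N-1)st Catalan number. -/
lemma vand (n : ℕ) :
    ∑ j ∈ Finset.range (n + 1), n.choose j * (n + 1).choose j = (2 * n + 1).choose n := by
  have h := Nat.add_choose_eq n (n + 1) n
  rw [Finset.Nat.sum_antidiagonal_eq_sum_range_succ_mk] at h
  rw [show 2 * n + 1 = n + (n + 1) by ring, h, ← Finset.sum_range_reflect]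
  refine Finset.sum_congr rfl fun j hj => ?_
  have hj' : j ≤ n := by simpa using Nat.lt_succ_iff.mp (Finset.mem_range.mp hj)
  simp only [Nat.add_sub_cancel]
  rw [Nat.choose_symm hj']

lemma choose_eq_catalan (n : ℕ) : (2 * n + 1).choose n = (2 * n + 1) * catalan n := by
  have h1 := succ_mul_catalan_eq_centralBinom n
  have h2 : (2 * n + 1) * (2 * n).choose n = (2 * n + 1).choose (n + 1) * (n + 1) :=
    Nat.add_one_mul_choose_eq (2 * n) n
  have h3 : (2 * n + 1).choose (n + 1) = (2 * n + 1).choose n := by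
    rw [← Nat.choose_symm (by omega)]
    congr 1
    omega
  have hc : (2 * n).choose n = (n + 1) * catalan n := by
    rw [h1]; simp [Nat.centralBinom]
  apply Nat.eq_of_mul_eq_mul_right (Nat.succ_pos n)
  calc (2 * n + 1).choose n * (n + 1) = (2 * n + 1) * (2 * n).choose n := by rw [h2, h3]
    _ = (2 * n + 1) * catalan n * (n + 1) := by rw [hc]; ring

theorem stmt3 (N : ℕ) (hN : 1 ≤ N) :
    ∑ k ∈ Finset.Icc 1 N,
        (k : ℚ) * ((1 / k) * ((N - 1).choose (k - 1)) * (N.choose (k - 1)))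
      = ((2 * N - 1) : ℚ) * (catalan (N - 1)) := by
  obtain ⟨n, rfl⟩ : ∃ n, N = n + 1 := ⟨N - 1, (Nat.succ_pred_eq_of_pos hN).symm⟩
  simp only [Nat.add_sub_cancel]
  rw [show Finset.Icc 1 (n + 1) = Finset.Ico 1 (n + 2) by rfl, Finset.sum_Ico_eq_sum_range]
  simp only [show n + 2 - 1 = n + 1 from rfl]
  have key : ∀ i ∈ Finset.range (n + 1),
      ((1 + i : ℕ) : ℚ) * ((1 / (1 + i : ℕ) : ℚ) * (n.choose (1 + i - 1)) * ((n + 1).choose (1 + i - 1)))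
        = ((n.choose i * (n + 1).choose i : ℕ) : ℚ) := by
    intro i _
    have hne : ((1 + i : ℕ) : ℚ) ≠ 0 := by positivity
    field_simp
    rw [show 1 + i - 1 = i by omega]; push_cast; ring
  rw [Finset.sum_congr rfl key, ← Nat.cast_sum, vand, choose_eq_catalan]
  push_cast
  ring
end

section
/- The total number of left-to-right maxima over all 123-avoiding permutations of {1,...,N} equals 2*C_N - C_{N-1}; equivalently, the expected number of left-to-right maxima of a uniformly random 123-avoiding permutation of {1,...,N} is 2 - C_{N-1}/C_N. -/
open Finset

/-- The number of left-to-right maxima of a permutation. -/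
def lrmCount {N : ℕ} (π : Equiv.Perm (Fin N)) : ℕ :=
  (Finset.univ.filter (fun j : Fin N => ∀ i, i < j → π i < π j)).card

/-- 123-avoidance. -/
def Avoids123 {N : ℕ} (π : Equiv.Perm (Fin N)) : Prop :=
  ∀ i j k : Fin N, i < j → j < k → ¬(π i < π j ∧ π j < π k)

instance {N : ℕ} : DecidablePred (@Avoids123 N) := fun π => by
  unfold Avoids123; infer_instance

section Aux

open Equiv

variable {N : ℕ}

/-- no increasing pair whose smaller value is ≥ m -/
def NoPairGE (m : ℕ) (π : Equiv.Perm (Fin N)) : Prop :=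
  ∀ i j : Fin N, i < j → ¬(m ≤ (π i : ℕ) ∧ π i < π j)

instance {m : ℕ} : DecidablePred (@NoPairGE N m) := fun π => by
  unfold NoPairGE; infer_instance

/-- the ballot/triangle counts -/
def bcnt (N m : ℕ) : ℕ :=
  (Finset.univ.filter (fun π : Equiv.Perm (Fin N) => Avoids123 π ∧ NoPairGE m π)).card

/-- insert a first entry with value `j` in front of (the relabeled) ρ -/
def ins (j : Fin (N+1)) (ρ : Equiv.Perm (Fin N)) : Equiv.Perm (Fin (N+1)) :=
  (finSuccEquiv' 0).trans ((ρ.optionCongr).trans (finSuccEquiv' j).symm)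

@[simp] lemma ins_zero {N : ℕ} (j : Fin (N+1)) (ρ : Equiv.Perm (Fin N)) :
    ins j ρ 0 = j := by
  simp [ins, finSuccEquiv'_at, finSuccEquiv'_symm_none]

@[simp] lemma ins_succ {N : ℕ} (j : Fin (N+1)) (ρ : Equiv.Perm (Fin N)) (i : Fin N) :
    ins j ρ i.succ = j.succAbove (ρ i) := by
  have h0 : (finSuccEquiv' (0 : Fin (N+1))) i.succ = some i :=
    finSuccEquiv'_above (by simp)
  simp [ins, h0, finSuccEquiv'_symm_some]

lemma ins_injective {N : ℕ} (j : Fin (N+1)) : Function.Injective (ins j) := by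
  intro ρ1 ρ2 h
  ext i
  have := congrArg (fun (τ : Equiv.Perm (Fin (N+1))) => τ i.succ) h
  simp only [ins_succ] at this
  exact congrArg Fin.val (Fin.succAbove_right_injective this)

lemma val_succAbove {N : ℕ} (j : Fin (N+1)) (k : Fin N) :
    ((j.succAbove k : Fin (N+1)) : ℕ) = if (k : ℕ) < (j : ℕ) then (k : ℕ) else (k : ℕ) + 1 := by
  rcases lt_or_ge (Fin.castSucc k) j with h | h
  · rw [Fin.succAbove_of_castSucc_lt _ _ h]
    simp only [Fin.lt_iff_val_lt_val, Fin.coe_castSucc] at h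
    rw [if_pos h, Fin.coe_castSucc]
  · rw [Fin.succAbove_of_le_castSucc _ _ h]
    simp only [Fin.le_iff_val_le_val, Fin.coe_castSucc] at h
    rw [if_neg (by omega), Fin.val_succ]

/-- removal of the first entry -/
noncomputable def dec (τ : Equiv.Perm (Fin (N+1))) : Equiv.Perm (Fin N) :=
  Equiv.removeNone ((finSuccEquiv' 0).symm.trans (τ.trans (finSuccEquiv' (τ 0))))

lemma succAbove_dec (τ : Equiv.Perm (Fin (N+1))) (i : Fin N) :
    (τ 0).succAbove (dec τ i) = τ i.succ := by
  obtain ⟨k, hk⟩ := Fin.exists_succAbove_eq (x := τ i.succ) (y := τ 0)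
    (by simp [EmbeddingLike.apply_eq_iff_eq, Fin.succ_ne_zero])
  have h0 : (finSuccEquiv' (0 : Fin (N+1))).symm (some i) = i.succ := by
    rw [finSuccEquiv'_symm_some]
    simp [Fin.succAbove_of_le_castSucc, Fin.zero_le]
  have he : ((finSuccEquiv' 0).symm.trans (τ.trans (finSuccEquiv' (τ 0)))) (some i) = some k := by
    simp only [Equiv.trans_apply, h0, ← hk, finSuccEquiv'_succAbove]
  have h2 : dec τ i = k :=
    Option.some_injective _ ((Equiv.removeNone_some _ ⟨k, he⟩).trans he)
  rw [h2, hk]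

lemma ins_dec (τ : Equiv.Perm (Fin (N+1))) : ins (τ 0) (dec τ) = τ := by
  apply Equiv.ext
  intro x
  rcases Fin.eq_zero_or_eq_succ x with rfl | ⟨i, rfl⟩
  · rw [ins_zero]
  · rw [ins_succ, succAbove_dec]

lemma lt_succAbove_iff (j : Fin (N+1)) (x : Fin N) :
    j < j.succAbove x ↔ (j : ℕ) ≤ (x : ℕ) := by
  rw [Fin.lt_iff_val_lt_val, val_succAbove]
  split_ifs with h <;> omega

lemma avoids_ins_iff (j : Fin (N+1)) (ρ : Equiv.Perm (Fin N)) :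
    Avoids123 (ins j ρ) ↔ Avoids123 ρ ∧ NoPairGE (j : ℕ) ρ := by
  constructor
  · intro H
    constructor
    · intro a b c hab hbc ⟨h1, h2⟩
      exact H a.succ b.succ c.succ (Fin.succ_lt_succ_iff.mpr hab)
        (Fin.succ_lt_succ_iff.mpr hbc)
        (by rw [ins_succ, ins_succ, ins_succ]
            exact ⟨Fin.succAbove_lt_succAbove_iff.mpr h1,
                   Fin.succAbove_lt_succAbove_iff.mpr h2⟩)
    · intro a b hab ⟨h1, h2⟩
      exact H 0 a.succ b.succ (Fin.succ_pos a) (Fin.succ_lt_succ_iff.mpr hab)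
        (by rw [ins_zero, ins_succ, ins_succ]
            exact ⟨(lt_succAbove_iff j (ρ a)).mpr h1,
                   Fin.succAbove_lt_succAbove_iff.mpr h2⟩)
  · rintro ⟨hA, hB⟩ i k l hik hkl ⟨h1, h2⟩
    rcases Fin.eq_zero_or_eq_succ k with rfl | ⟨b, rfl⟩
    · exact absurd hik (Fin.not_lt_zero _)
    rcases Fin.eq_zero_or_eq_succ l with rfl | ⟨c, rfl⟩
    · exact absurd hkl (Fin.not_lt_zero _)
    rcases Fin.eq_zero_or_eq_succ i with rfl | ⟨a, rfl⟩
    · simp only [ins_zero, ins_succ] at h1 h2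
      exact hB b c (Fin.succ_lt_succ_iff.mp hkl)
        ⟨(lt_succAbove_iff j (ρ b)).mp h1, Fin.succAbove_lt_succAbove_iff.mp h2⟩
    · simp only [ins_succ] at h1 h2
      exact hA a b c (Fin.succ_lt_succ_iff.mp hik) (Fin.succ_lt_succ_iff.mp hkl)
        ⟨Fin.succAbove_lt_succAbove_iff.mp h1, Fin.succAbove_lt_succAbove_iff.mp h2⟩

lemma noPairGE_mono {m m' : ℕ} (h : m ≤ m') {π : Equiv.Perm (Fin N)}
    (H : NoPairGE m π) : NoPairGE m' π :=
  fun i j hij ⟨h1, h2⟩ => H i j hij ⟨le_trans h h1, h2⟩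

lemma noPairGE_vac {m : ℕ} (h : N ≤ m + 1) (π : Equiv.Perm (Fin N)) : NoPairGE m π := by
  intro i j hij ⟨h1, h2⟩
  have := (π j).isLt
  rw [Fin.lt_iff_val_lt_val] at h2
  omega

/-- the case j < m -/
lemma noPairGE_ins_iff_lt {m : ℕ} (j : Fin (N+1)) (ρ : Equiv.Perm (Fin N))
    (hjm : (j : ℕ) < m) :
    NoPairGE m (ins j ρ) ↔ NoPairGE (m - 1) ρ := by
  constructor
  · intro H a b hab ⟨h1, h2⟩
    refine H a.succ b.succ (Fin.succ_lt_succ_iff.mpr hab)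
      ⟨?_, Fin.succAbove_lt_succAbove_iff.mpr h2⟩
    rw [ins_succ, val_succAbove]
    split_ifs with h <;> omega
  · intro H i k hik ⟨h1, h2⟩
    rcases Fin.eq_zero_or_eq_succ k with rfl | ⟨b, rfl⟩
    · exact absurd hik (Fin.not_lt_zero _)
    rcases Fin.eq_zero_or_eq_succ i with rfl | ⟨a, rfl⟩
    · rw [ins_zero] at h1; omega
    · simp only [ins_succ] at h1 h2
      rw [val_succAbove] at h1
      refine H a b (Fin.succ_lt_succ_iff.mp hik)
        ⟨?_, Fin.succAbove_lt_succAbove_iff.mp h2⟩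
      split_ifs at h1 <;> omega

/-- the case j = N (last) -/
lemma noPairGE_ins_iff_last {m : ℕ} (ρ : Equiv.Perm (Fin N)) :
    NoPairGE m (ins (Fin.last N) ρ) ↔ NoPairGE m ρ := by
  have hval : ∀ x : Fin N, (((Fin.last N).succAbove x : Fin (N+1)) : ℕ) = (x : ℕ) := by
    intro x
    rw [val_succAbove]
    exact if_pos x.isLt
  constructor
  · intro H a b hab ⟨h1, h2⟩
    refine H a.succ b.succ (Fin.succ_lt_succ_iff.mpr hab)
      ⟨?_, Fin.succAbove_lt_succAbove_iff.mpr h2⟩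
    rw [ins_succ, hval]; exact h1
  · intro H i k hik ⟨h1, h2⟩
    rcases Fin.eq_zero_or_eq_succ k with rfl | ⟨b, rfl⟩
    · exact absurd hik (Fin.not_lt_zero _)
    rcases Fin.eq_zero_or_eq_succ i with rfl | ⟨a, rfl⟩
    · simp only [ins_zero, ins_succ] at h2
      rw [Fin.lt_iff_val_lt_val, Fin.val_last, hval] at h2
      have := (ρ b).isLt
      omega
    · simp only [ins_succ] at h1 h2
      rw [hval] at h1
      exact H a b (Fin.succ_lt_succ_iff.mp hik)
        ⟨h1, Fin.succAbove_lt_succAbove_iff.mp h2⟩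

/-- the case m ≤ j < N : impossible -/
lemma not_P_ins_mid {m : ℕ} (j : Fin (N+1)) (ρ : Equiv.Perm (Fin N))
    (hmj : m ≤ (j : ℕ)) (hjN : (j : ℕ) < N) :
    ¬ NoPairGE m (ins j ρ) := by
  intro H
  set τ := ins j ρ with hτ
  obtain ⟨p, hp⟩ : ∃ p, τ p = Fin.last N := ⟨τ.symm (Fin.last N), Equiv.apply_symm_apply _ _⟩
  rcases Fin.eq_zero_or_eq_succ p with rfl | ⟨a, rfl⟩
  · rw [ins_zero] at hp
    rw [hp] at hjN
    simp at hjN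
  · refine H 0 a.succ (Fin.succ_pos a) ⟨?_, ?_⟩
    · rw [ins_zero]; exact hmj
    · rw [ins_zero, hp, Fin.lt_iff_val_lt_val, Fin.val_last]; exact hjN


lemma fiber_card (m : ℕ) (hm : m ≤ N) (j : Fin (N+1)) :
    (Finset.univ.filter (fun τ : Equiv.Perm (Fin (N+1)) =>
        (Avoids123 τ ∧ NoPairGE m τ) ∧ τ 0 = j)).card
      = if (j : ℕ) < m then bcnt N j else if (j : ℕ) = N then bcnt N m else 0 := by
  split_ifs with h1 h2
  · -- j < m
    rw [bcnt]
    symm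
    apply Finset.card_bij (fun ρ _ => ins j ρ)
    · intro ρ hρ
      simp only [mem_filter, mem_univ, true_and] at hρ ⊢
      refine ⟨⟨(avoids_ins_iff j ρ).mpr ⟨hρ.1, hρ.2⟩, ?_⟩, ins_zero j ρ⟩
      exact (noPairGE_ins_iff_lt j ρ h1).mpr (noPairGE_mono (by omega) hρ.2)
    · intro ρ1 _ ρ2 _ h
      exact ins_injective j h
    · intro τ hτ
      simp only [mem_filter, mem_univ, true_and] at hτ
      obtain ⟨⟨hA, hB⟩, h0⟩ := hτ
      refine ⟨dec τ, ?_, by rw [← h0, ins_dec]⟩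
      simp only [mem_filter, mem_univ, true_and]
      have := (avoids_ins_iff (τ 0) (dec τ)).mp (by rw [ins_dec]; exact hA)
      rw [h0] at this
      exact this
  · -- j = N, i.e. j = last
    have hj : j = Fin.last N := Fin.ext (by simp [h2])
    subst hj
    rw [bcnt]
    symm
    apply Finset.card_bij (fun ρ _ => ins (Fin.last N) ρ)
    · intro ρ hρ
      simp only [mem_filter, mem_univ, true_and] at hρ ⊢
      refine ⟨⟨(avoids_ins_iff _ ρ).mpr ⟨hρ.1, ?_⟩, ?_⟩, ins_zero _ ρ⟩
      · exact noPairGE_vac (by simp) ρ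
      · exact (noPairGE_ins_iff_last ρ).mpr hρ.2
    · intro ρ1 _ ρ2 _ h
      exact ins_injective _ h
    · intro τ hτ
      simp only [mem_filter, mem_univ, true_and] at hτ
      obtain ⟨⟨hA, hB⟩, h0⟩ := hτ
      refine ⟨dec τ, ?_, by rw [← h0, ins_dec]⟩
      simp only [mem_filter, mem_univ, true_and]
      constructor
      · have := (avoids_ins_iff (τ 0) (dec τ)).mp (by rw [ins_dec]; exact hA)
        exact this.1
      · apply (noPairGE_ins_iff_last (dec τ)).mp
        rw [← h0, ins_dec]
        exact hB
  · -- middle: empty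
    rw [Finset.card_eq_zero, Finset.filter_eq_empty_iff]
    intro τ _
    rintro ⟨⟨hA, hB⟩, h0⟩
    have hjN : (j : ℕ) < N := lt_of_le_of_ne (Nat.lt_succ_iff.mp j.isLt) h2
    have hmj : m ≤ (j : ℕ) := Nat.le_of_not_lt h1
    exact not_P_ins_mid j (dec τ) hmj hjN (by rw [← h0, ins_dec]; exact hB)

lemma bcnt_succ (m : ℕ) (hm : m ≤ N) :
    bcnt (N+1) m = (∑ j ∈ range m, bcnt N j) + bcnt N m := by
  rw [bcnt, Finset.card_eq_sum_card_fiberwise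
    (f := fun τ : Equiv.Perm (Fin (N+1)) => τ 0) (t := univ) (fun x _ => mem_univ _)]
  have : ∀ j : Fin (N+1),
      (Finset.filter (fun τ => τ 0 = j)
        (Finset.univ.filter (fun τ : Equiv.Perm (Fin (N+1)) =>
          Avoids123 τ ∧ NoPairGE m τ))).card
      = if (j : ℕ) < m then bcnt N j else if (j : ℕ) = N then bcnt N m else 0 := by
    intro j
    rw [Finset.filter_filter]
    exact fiber_card m hm j
  rw [Finset.sum_congr rfl (fun j _ => this j)]
  rw [Fin.sum_univ_eq_sum_range
    (fun j => if j < m then bcnt N j else if j = N then bcnt N m else 0)]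
  rw [Finset.range_eq_Ico, ← Finset.sum_Ico_consecutive _ (Nat.zero_le m) (by omega)]
  congr 1
  · rw [Finset.range_eq_Ico]
    apply Finset.sum_congr rfl
    intro j hj
    rw [Finset.mem_Ico] at hj
    rw [if_pos hj.2]
  · rw [Finset.sum_Ico_succ_top (by omega)]
    have : ∀ j ∈ Finset.Ico m N, (if j < m then bcnt N j else if j = N then bcnt N m else 0) = 0 := by
      intro j hj
      rw [Finset.mem_Ico] at hj
      rw [if_neg (by omega), if_neg (by omega)]
    rw [Finset.sum_congr rfl this, Finset.sum_const, smul_zero, zero_add,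
      if_neg (by omega), if_pos rfl]


lemma bcnt_zero (m : ℕ) : bcnt 0 m = 1 := by
  rw [bcnt]
  have h : ∀ π : Equiv.Perm (Fin 0), Avoids123 π ∧ NoPairGE m π :=
    fun π => ⟨fun i => i.elim0, fun i => i.elim0⟩
  rw [Finset.filter_true_of_mem (fun x _ => h x), Finset.card_univ]
  simp

lemma bcnt_vac {N m m' : ℕ} (h : N ≤ m + 1) (h' : N ≤ m' + 1) : bcnt N m = bcnt N m' := by
  rw [bcnt, bcnt]
  congr 1
  apply Finset.filter_congr
  intro π _
  constructor
  · rintro ⟨hA, _⟩; exact ⟨hA, noPairGE_vac h' π⟩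
  · rintro ⟨hA, _⟩; exact ⟨hA, noPairGE_vac h π⟩


lemma binom_sum (N : ℕ) : ∀ m ≤ N,
    (N+2) * ∑ j ∈ range (m+1), (N+1-j) * Nat.choose (N+j) j
      = (N+1) * ((N+2-m) * Nat.choose (N+1+m) m) := by
  intro m
  induction m with
  | zero => intro _; simp; ring
  | succ m ih =>
    intro hm
    have hm' : m ≤ N := by omega
    rw [Finset.sum_range_succ, Nat.mul_add, ih hm']
    obtain ⟨k, rfl⟩ : ∃ k, N = m + 1 + k := ⟨N - (m+1), by omega⟩
    have pascal : Nat.choose (m+1+k+m+2) (m+1)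
        = Nat.choose (m+1+k+m+1) m + Nat.choose (m+1+k+m+1) (m+1) := by
      have := Nat.choose_succ_succ (m+1+k+m+1) m
      simpa [Nat.succ_eq_add_one] using this
    have fact2 : Nat.choose (m+1+k+m+1) (m+1) * (m+1)
        = Nat.choose (m+1+k+m+1) m * (m+1+k+1) := by
      have := Nat.choose_succ_right_eq (m+1+k+m+1) m
      have h3 : m+1+k+m+1 - m = m+1+k+1 := by omega
      rw [h3] at this
      exact this
    have e0 : m+1+k+(m+1) = m+1+k+m+1 := by ring
    have e1 : m+1+k+1+m = m+1+k+m+1 := by ring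
    have e2 : m+1+k+1+(m+1) = m+1+k+m+2 := by ring
    have e3 : m+1+k+2-m = k+3 := by omega
    have e4 : m+1+k+2-(m+1) = k+2 := by omega
    have e5 : m+1+k+1-(m+1) = k+1 := by omega
    rw [e0, e1, e2, e3, e4, e5]
    zify at pascal fact2 ⊢
    linear_combination (-((m:ℤ)+k+2)*((k:ℤ)+2))*pascal - fact2

lemma bcnt_formula : ∀ N, ∀ m ≤ N, (N+1) * bcnt N m = (N+1-m) * Nat.choose (N+m) m := by
  intro N
  induction N with
  | zero => intro m hm; interval_cases m; simp [bcnt_zero]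
  | succ N ih =>
    have key : ∀ m ≤ N, (N+2) * bcnt (N+1) m = (N+2-m) * Nat.choose (N+1+m) m := by
      intro m hm
      have h1 : (N+1) * ((N+2) * bcnt (N+1) m)
          = (N+1) * ((N+2-m) * Nat.choose (N+1+m) m) := by
        rw [bcnt_succ m hm, ← Finset.sum_range_succ]
        calc (N+1) * ((N+2) * ∑ j ∈ range (m+1), bcnt N j)
            = (N+2) * ((N+1) * ∑ j ∈ range (m+1), bcnt N j) := by ring
          _ = (N+2) * ∑ j ∈ range (m+1), (N+1) * bcnt N j := by
              rw [Finset.mul_sum]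
          _ = (N+2) * ∑ j ∈ range (m+1), (N+1-j) * Nat.choose (N+j) j := by
              congr 1
              exact Finset.sum_congr rfl (fun j hj => ih j (by
                rw [Finset.mem_range] at hj; omega))
          _ = (N+1) * ((N+2-m) * Nat.choose (N+1+m) m) := binom_sum N m hm
      exact Nat.eq_of_mul_eq_mul_left (by omega) h1
    intro m hm
    rcases Nat.lt_or_ge m (N+1) with h | h
    · exact key m (by omega)
    · have hm1 : m = N + 1 := by omega
      subst hm1
      rw [bcnt_vac (by omega) (m' := N) (by omega)]
      have h2 := key N le_rfl
      have h3 : N + 2 - N = 2 := by omega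
      have h4 : N + 2 - (N+1) = 1 := by omega
      rw [h3] at h2
      rw [h4, one_mul, h2]
      have e1 : N + 1 + (N + 1) = 2*N + 1 + 1 := by ring
      have e2 : N + 1 + N = 2*N + 1 := by ring
      rw [e1, e2]
      have p := Nat.choose_succ_succ (2*N+1) N
      have s := Nat.choose_symm_half N
      simp [Nat.succ_eq_add_one] at p
      omega

lemma bcnt_diag_eq_catalan (N : ℕ) : bcnt N N = catalan N := by
  have h := bcnt_formula N N le_rfl
  have h2 : N + 1 - N = 1 := by omega
  rw [h2, one_mul] at h
  have h3 : Nat.choose (N+N) N = Nat.centralBinom N := by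
    rw [Nat.centralBinom]; congr 1; ring
  rw [h3, ← succ_mul_catalan_eq_centralBinom] at h
  exact Nat.eq_of_mul_eq_mul_left (by omega) h


lemma card_avoiders (N : ℕ) :
    (Finset.univ.filter (fun π : Equiv.Perm (Fin N) => Avoids123 π)).card = catalan N := by
  rw [← bcnt_diag_eq_catalan, bcnt]
  congr 1
  apply Finset.filter_congr
  intro π _
  constructor
  · intro hA; exact ⟨hA, noPairGE_vac (by omega) π⟩
  · rintro ⟨hA, _⟩; exact hA

lemma card_first_last (M : ℕ) :
    (Finset.univ.filter (fun τ : Equiv.Perm (Fin (M+1)) =>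
      Avoids123 τ ∧ τ 0 = Fin.last M)).card = catalan M := by
  have h := fiber_card (N := M) M le_rfl (Fin.last M)
  rw [Fin.val_last, if_neg (lt_irrefl M), if_pos rfl, bcnt_diag_eq_catalan] at h
  rw [← h]
  congr 1
  apply Finset.filter_congr
  intro τ _
  constructor
  · rintro ⟨hA, h0⟩; exact ⟨⟨hA, noPairGE_vac (by omega) τ⟩, h0⟩
  · rintro ⟨⟨hA, _⟩, h0⟩; exact ⟨hA, h0⟩


end Aux

lemma lrm_formula {M : ℕ} (π : Equiv.Perm (Fin (M+1))) (hA : Avoids123 π) :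
    lrmCount π = if π 0 = Fin.last M then 1 else 2 := by
  rw [lrmCount]
  have h0 : (0 : Fin (M+1)) ∈ Finset.univ.filter
      (fun j : Fin (M+1) => ∀ i, i < j → π i < π j) := by
    simp only [mem_filter, mem_univ, true_and]
    intro i hi
    exact absurd hi (Fin.not_lt_zero _)
  split_ifs with hlast
  · rw [Finset.card_eq_one]
    refine ⟨0, ?_⟩
    apply Finset.eq_singleton_iff_unique_mem.mpr
    refine ⟨h0, ?_⟩
    intro j hj
    by_contra hne
    rw [mem_filter] at hj
    have hlt : π 0 < π j := hj.2 0 (Fin.pos_iff_ne_zero.mpr hne)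
    rw [hlast] at hlt
    exact absurd hlt (Fin.not_lt.mpr (Fin.le_last _))
  · set p := π.symm (Fin.last M) with hp
    have hpval : π p = Fin.last M := Equiv.apply_symm_apply _ _
    have hpne : p ≠ 0 := by
      intro h
      rw [h] at hpval
      exact hlast hpval
    have hmem : p ∈ Finset.univ.filter
        (fun j : Fin (M+1) => ∀ i, i < j → π i < π j) := by
      simp only [mem_filter, mem_univ, true_and]
      intro i hi
      rw [hpval]
      refine lt_of_le_of_ne (Fin.le_last _) ?_
      intro h
      exact absurd (π.injective (h.trans hpval.symm)) (ne_of_lt hi)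
    have : Finset.univ.filter (fun j : Fin (M+1) => ∀ i, i < j → π i < π j) = {0, p} := by
      apply Finset.Subset.antisymm
      · intro j hj
        simp only [mem_insert, mem_singleton]
        by_contra hc
        push_neg at hc
        obtain ⟨hj0, hjp⟩ := hc
        rw [mem_filter] at hj
        rcases lt_trichotomy j p with h | h | h
        · refine hA 0 j p (Fin.pos_iff_ne_zero.mpr hj0) h ⟨hj.2 0 (Fin.pos_iff_ne_zero.mpr hj0), ?_⟩
          rw [hpval]
          refine lt_of_le_of_ne (Fin.le_last _) ?_
          intro hh
          exact hjp (π.injective (hh.trans hpval.symm))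
        · exact hjp h
        · have := hj.2 p h
          rw [hpval] at this
          exact absurd this (Fin.not_lt.mpr (Fin.le_last _))
      · intro j hj
        simp only [mem_insert, mem_singleton] at hj
        rcases hj with rfl | rfl
        · exact h0
        · exact hmem
    rw [this, Finset.card_insert_of_notMem (by simpa using Ne.symm hpne),
      Finset.card_singleton]

theorem stmt8 (N : ℕ) (hN : 1 ≤ N) :
    ∑ π ∈ Finset.univ.filter (fun π : Equiv.Perm (Fin N) => Avoids123 π),
        lrmCount π
      = 2 * catalan N - catalan (N - 1) := by
  obtain ⟨M, rfl⟩ : ∃ M, N = M + 1 := ⟨N - 1, by omega⟩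
  set F := Finset.univ.filter (fun π : Equiv.Perm (Fin (M+1)) => Avoids123 π) with hF
  have hsum : ∑ π ∈ F, lrmCount π
      = ∑ π ∈ F, (if π 0 = Fin.last M then 1 else 2) := by
    apply Finset.sum_congr rfl
    intro π hπ
    rw [hF, mem_filter] at hπ
    exact lrm_formula π hπ.2
  have hc1 : (F.filter (fun π => π 0 = Fin.last M)).card = catalan M := by
    rw [hF, Finset.filter_filter]
    exact card_first_last M
  have hcF : F.card = catalan (M+1) := card_avoiders (M+1)
  have hsplit : ∑ π ∈ F, (if π 0 = Fin.last M then 1 else 2)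
      = (F.filter (fun π => π 0 = Fin.last M)).card * 1
        + (F.filter (fun π => ¬ π 0 = Fin.last M)).card * 2 := by
    rw [Finset.sum_ite, Finset.sum_const, Finset.sum_const, smul_eq_mul, smul_eq_mul]
  have hcomp : (F.filter (fun π => ¬ π 0 = Fin.last M)).card
      = F.card - (F.filter (fun π => π 0 = Fin.last M)).card := by
    rw [Finset.filter_not, Finset.card_sdiff_of_subset (Finset.filter_subset _ _)]
  have hle : (F.filter (fun π => π 0 = Fin.last M)).card ≤ F.card :=
    Finset.card_filter_le _ _
  have hle2 : catalan M ≤ catalan (M+1) := by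
    rw [← hc1, ← hcF]; exact hle
  rw [hsum, hsplit, hcomp, hc1, hcF]
  have : M + 1 - 1 = M := by omega
  rw [this]
  omega
end

section
/- For each N >= 1 there exists a bijection between 231-avoiding permutations of {1,...,N} and 213-avoiding permutations of {1,...,N} that preserves the set of values of the left-to-right maxima (in particular, it preserves the number of left-to-right maxima). -/
open Finset

/-- 231-avoidance. -/
def Avoids231 {N : ℕ} (π : Equiv.Perm (Fin N)) : Prop :=
  ∀ i j k : Fin N, i < j → j < k → ¬(π k < π i ∧ π i < π j)

instance {N : ℕ} : DecidablePred (@Avoids231 N) := fun π => by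
  unfold Avoids231; infer_instance

/-- 213-avoidance. -/
def Avoids213 {N : ℕ} (π : Equiv.Perm (Fin N)) : Prop :=
  ∀ i j k : Fin N, i < j → j < k → ¬(π j < π i ∧ π i < π k)

instance {N : ℕ} : DecidablePred (@Avoids213 N) := fun π => by
  unfold Avoids213; infer_instance

/-- The set of values of the left-to-right maxima of a permutation. -/
def lrmValues {N : ℕ} (π : Equiv.Perm (Fin N)) : Finset (Fin N) :=
  (Finset.univ.filter (fun j : Fin N => ∀ i, i < j → π i < π j)).image π

section MyAux
open List

variable {α : Type*} [LinearOrder α]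

def phiL : List α → List α
  | [] => []
  | m :: rest =>
      m :: (phiL (rest.filter (fun x => m < x)) ++ phiL (rest.filter (fun x => x < m)))
  termination_by l => l.length
  decreasing_by
    all_goals simp only [List.length_cons, List.length_unattach]; exact Nat.lt_succ_of_le ((List.length_filter_le _ _).trans (by simp))

def psiL : List α → List α
  | [] => []
  | m :: rest =>
      m :: (psiL (rest.filter (fun x => x < m)) ++ psiL (rest.filter (fun x => m < x)))
  termination_by l => l.length
  decreasing_by
    all_goals simp only [List.length_cons, List.length_unattach]; exact Nat.lt_succ_of_le ((List.length_filter_le _ _).trans (by simp))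

def lrmL : List α → List α
  | [] => []
  | m :: rest => m :: lrmL (rest.filter (fun x => m < x))
  termination_by l => l.length
  decreasing_by
    simp only [List.length_cons, List.length_unattach]; exact Nat.lt_succ_of_le ((List.length_filter_le _ _).trans (by simp))


def Av231 (l : List α) : Prop := ∀ a b c : α, [a,b,c] <+ l → ¬(c < a ∧ a < b)
def Av213 (l : List α) : Prop := ∀ a b c : α, [a,b,c] <+ l → ¬(b < a ∧ a < c)

theorem Av231.sublist {l l' : List α} (h : Av231 l) (hs : l' <+ l) : Av231 l' :=
  fun a b c hsub => h a b c (hsub.trans hs)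

theorem Av213.sublist {l l' : List α} (h : Av213 l) (hs : l' <+ l) : Av213 l' :=
  fun a b c hsub => h a b c (hsub.trans hs)

theorem phiL_perm : ∀ (l : List α), l.Nodup → phiL l ~ l
  | [] => fun _ => by rw [phiL]
  | m :: rest => fun hnd => by
      rw [List.nodup_cons] at hnd
      rw [phiL]
      refine List.Perm.cons m ?_
      have h1 := phiL_perm (rest.filter (fun x => m < x)) (hnd.2.filter _)
      have h2 := phiL_perm (rest.filter (fun x => x < m)) (hnd.2.filter _)
      refine (h1.append h2).trans ?_
      have : rest.filter (fun x => x < m) = rest.filter (fun x => !decide (m < x)) := by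
        refine List.filter_congr (fun x hx => ?_)
        have hne : x ≠ m := fun h => hnd.1 (h ▸ hx)
        rcases lt_trichotomy x m with h | h | h
        · simp [h, not_lt_of_gt h]
        · exact absurd h hne
        · simp [not_lt_of_gt h, h]
      rw [this]
      exact List.filter_append_perm _ rest
  termination_by l => l.length
  decreasing_by
    all_goals simp only [List.length_cons]; exact Nat.lt_succ_of_le (List.length_filter_le _ _)

theorem psiL_perm : ∀ (l : List α), l.Nodup → psiL l ~ l
  | [] => fun _ => by rw [psiL]
  | m :: rest => fun hnd => by
      rw [List.nodup_cons] at hnd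
      rw [psiL]
      refine List.Perm.cons m ?_
      have h1 := psiL_perm (rest.filter (fun x => x < m)) (hnd.2.filter _)
      have h2 := psiL_perm (rest.filter (fun x => m < x)) (hnd.2.filter _)
      refine (h1.append h2).trans ?_
      have : rest.filter (fun x => m < x) = rest.filter (fun x => !decide (x < m)) := by
        refine List.filter_congr (fun x hx => ?_)
        have hne : x ≠ m := fun h => hnd.1 (h ▸ hx)
        rcases lt_trichotomy x m with h | h | h
        · simp [h, not_lt_of_gt h]
        · exact absurd h hne
        · simp [not_lt_of_gt h, h]
      rw [this]
      exact List.filter_append_perm _ rest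
  termination_by l => l.length
  decreasing_by
    all_goals simp only [List.length_cons]; exact Nat.lt_succ_of_le (List.length_filter_le _ _)

theorem mem_of_mem_phiL {l : List α} (hnd : l.Nodup) {x : α} (hx : x ∈ phiL l) : x ∈ l :=
  (phiL_perm l hnd).mem_iff.mp hx

theorem mem_of_mem_psiL {l : List α} (hnd : l.Nodup) {x : α} (hx : x ∈ psiL l) : x ∈ l :=
  (psiL_perm l hnd).mem_iff.mp hx

theorem lrmL_phiL : ∀ (l : List α), l.Nodup → lrmL (phiL l) = lrmL l
  | [] => fun _ => by rw [phiL]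
  | m :: rest => fun hnd => by
      rw [List.nodup_cons] at hnd
      have hndB := hnd.2.filter (fun x => decide (m < x))
      have hndA := hnd.2.filter (fun x => decide (x < m))
      rw [phiL, lrmL, lrmL, List.filter_append]
      have h1 : (phiL (rest.filter (fun x => m < x))).filter (fun x => m < x)
          = phiL (rest.filter (fun x => m < x)) := by
        refine List.filter_eq_self.mpr (fun x hx => ?_)
        have := mem_of_mem_phiL hndB hx
        simpa using (List.of_mem_filter this)
      have h2 : (phiL (rest.filter (fun x => x < m))).filter (fun x => m < x)
          = [] := by
        refine List.filter_eq_nil_iff.mpr (fun x hx => ?_)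
        have := mem_of_mem_phiL hndA hx
        have hxm : x < m := by simpa using (List.of_mem_filter this)
        simp [not_lt_of_gt hxm]
      rw [h1, h2, List.append_nil, lrmL_phiL _ hndB]
  termination_by l => l.length
  decreasing_by
    all_goals simp only [List.length_cons]; exact Nat.lt_succ_of_le (List.length_filter_le _ _)

theorem lrmL_psiL : ∀ (l : List α), l.Nodup → lrmL (psiL l) = lrmL l
  | [] => fun _ => by rw [psiL]
  | m :: rest => fun hnd => by
      rw [List.nodup_cons] at hnd
      have hndB := hnd.2.filter (fun x => decide (m < x))
      have hndA := hnd.2.filter (fun x => decide (x < m))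
      rw [psiL, lrmL, lrmL, List.filter_append]
      have h1 : (psiL (rest.filter (fun x => m < x))).filter (fun x => m < x)
          = psiL (rest.filter (fun x => m < x)) := by
        refine List.filter_eq_self.mpr (fun x hx => ?_)
        have := mem_of_mem_psiL hndB hx
        simpa using (List.of_mem_filter this)
      have h2 : (psiL (rest.filter (fun x => x < m))).filter (fun x => m < x)
          = [] := by
        refine List.filter_eq_nil_iff.mpr (fun x hx => ?_)
        have := mem_of_mem_psiL hndA hx
        have hxm : x < m := by simpa using (List.of_mem_filter this)
        simp [not_lt_of_gt hxm]
      rw [h1, h2, List.nil_append, lrmL_psiL _ hndB]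
  termination_by l => l.length
  decreasing_by
    all_goals simp only [List.length_cons]; exact Nat.lt_succ_of_le (List.length_filter_le _ _)

theorem split231 {m : α} : ∀ {rest : List α}, Av231 (m :: rest) → m ∉ rest →
    rest = rest.filter (fun x => x < m) ++ rest.filter (fun x => m < x)
  | [], _, _ => rfl
  | x :: t, hav, hm => by
      have hxm : x ≠ m := fun h => hm (h ▸ List.mem_cons_self (a := x) (l := t))
      have hmt : m ∉ t := fun h => hm (List.mem_cons_of_mem _ h)
      rcases lt_trichotomy x m with h | h | h
      · have ht : t = t.filter (fun x => x < m) ++ t.filter (fun x => m < x) :=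
          split231 (hav.sublist ((t.sublist_cons_self x).cons_cons m)) hmt
        simp only [List.filter_cons, h, not_lt_of_gt h, decide_true, decide_false,
          if_true, if_false, Bool.false_eq_true, List.cons_append]
        exact congrArg _ ht
      · exact absurd h hxm
      · have hall : ∀ y ∈ t, m < y := by
          intro y hy
          by_contra hy'
          have hym : y < m := lt_of_le_of_ne (le_of_not_gt hy') (fun h => hm (h ▸ List.mem_cons_of_mem x hy))
          have hsub : [m, x, y] <+ m :: x :: t :=
            ((List.singleton_sublist.mpr hy).cons_cons x).cons_cons m
          exact hav m x y hsub ⟨hym, h⟩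
        have h1 : (x :: t).filter (fun x => x < m) = [] := by
          refine List.filter_eq_nil_iff.mpr ?_
          intro y hy
          rcases List.mem_cons.mp hy with rfl | hy
          · simp [not_lt_of_gt h]
          · simp [not_lt_of_gt (hall y hy)]
        have h2 : (x :: t).filter (fun x => m < x) = x :: t := by
          refine List.filter_eq_self.mpr ?_
          intro y hy
          rcases List.mem_cons.mp hy with rfl | hy
          · simp [h]
          · simp [hall y hy]
        rw [h1, h2, List.nil_append]

theorem split213 {m : α} : ∀ {rest : List α}, Av213 (m :: rest) → m ∉ rest →
    rest = rest.filter (fun x => m < x) ++ rest.filter (fun x => x < m)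
  | [], _, _ => rfl
  | x :: t, hav, hm => by
      have hxm : x ≠ m := fun h => hm (h ▸ List.mem_cons_self (a := x) (l := t))
      have hmt : m ∉ t := fun h => hm (List.mem_cons_of_mem _ h)
      rcases lt_trichotomy m x with h | h | h
      · have ht : t = t.filter (fun x => m < x) ++ t.filter (fun x => x < m) :=
          split213 (hav.sublist ((t.sublist_cons_self x).cons_cons m)) hmt
        simp only [List.filter_cons, h, not_lt_of_gt h, decide_true, decide_false,
          if_true, if_false, Bool.false_eq_true, List.cons_append]
        exact congrArg _ ht
      · exact absurd h.symm hxm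
      · have hall : ∀ y ∈ t, y < m := by
          intro y hy
          by_contra hy'
          have hym : m < y := lt_of_le_of_ne (le_of_not_gt hy') (fun h => hm (h.symm ▸ List.mem_cons_of_mem x hy))
          have hsub : [m, x, y] <+ m :: x :: t :=
            ((List.singleton_sublist.mpr hy).cons_cons x).cons_cons m
          exact hav m x y hsub ⟨h, hym⟩
        have h1 : (x :: t).filter (fun x => m < x) = [] := by
          refine List.filter_eq_nil_iff.mpr ?_
          intro y hy
          rcases List.mem_cons.mp hy with rfl | hy
          · simp [not_lt_of_gt h]
          · simp [not_lt_of_gt (hall y hy)]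
        have h2 : (x :: t).filter (fun x => x < m) = x :: t := by
          refine List.filter_eq_self.mpr ?_
          intro y hy
          rcases List.mem_cons.mp hy with rfl | hy
          · simp [h]
          · simp [hall y hy]
        rw [h1, h2, List.nil_append]


theorem build213 {m : α} {β γ : List α} (hβ : ∀ x ∈ β, m < x) (hγ : ∀ x ∈ γ, x < m)
    (aβ : Av213 β) (aγ : Av213 γ) : Av213 (m :: (β ++ γ)) := by
  intro a b c hsub ⟨hba, hac⟩
  rcases List.sublist_cons_iff.mp hsub with h | ⟨r, hr, h⟩
  · obtain ⟨u, v, huv, hu, hv⟩ := List.sublist_append_iff.mp h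
    rcases u with _ | ⟨a1, u⟩
    · simp only [List.nil_append] at huv
      subst huv
      exact aγ a b c hv ⟨hba, hac⟩
    rcases u with _ | ⟨a2, u⟩
    · simp only [List.cons_append, List.cons.injEq, List.nil_append] at huv
      obtain ⟨rfl, huv⟩ := huv
      subst huv
      have ha : a ∈ β := hu.subset (List.mem_cons_self)
      have hc : c ∈ γ := hv.subset (List.mem_cons_of_mem _ (List.mem_cons_self))
      exact absurd hac (not_lt_of_gt ((hγ c hc).trans (hβ a ha)))
    rcases u with _ | ⟨a3, u⟩
    · simp only [List.cons_append, List.cons.injEq, List.nil_append] at huv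
      obtain ⟨rfl, rfl, huv⟩ := huv
      subst huv
      have ha : a ∈ β := hu.subset (List.mem_cons_self)
      have hc : c ∈ γ := hv.subset (List.mem_cons_self)
      exact absurd hac (not_lt_of_gt ((hγ c hc).trans (hβ a ha)))
    · have hlen := congrArg List.length huv
      simp only [List.length_cons, List.length_append, List.length_nil] at hlen
      have hu0 : u = [] := List.eq_nil_of_length_eq_zero (by omega)
      have hv0 : v = [] := List.eq_nil_of_length_eq_zero (by omega)
      subst hu0; subst hv0
      simp only [List.append_nil] at huv
      obtain ⟨rfl, rfl, rfl⟩ : a1 = a ∧ a2 = b ∧ a3 = c := by simpa using huv.symm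
      exact aβ _ _ _ hu ⟨hba, hac⟩
  · obtain ⟨rfl, hbc⟩ : m = a ∧ r = [b, c] := by simpa [List.cons.injEq] using hr.symm
    subst hbc
    obtain ⟨u, v, huv, hu, hv⟩ := List.sublist_append_iff.mp h
    rcases u with _ | ⟨b1, u⟩
    · simp only [List.nil_append] at huv
      subst huv
      have hc : c ∈ γ := hv.subset (List.mem_cons_of_mem _ (List.mem_cons_self))
      exact absurd hac (not_lt_of_gt (hγ c hc))
    · simp only [List.cons_append, List.cons.injEq] at huv
      obtain ⟨rfl, _⟩ := huv
      have hb : b ∈ β := hu.subset (List.mem_cons_self)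
      exact absurd hba (not_lt_of_gt (hβ b hb))

theorem build231 {m : α} {γ β : List α} (hγ : ∀ x ∈ γ, x < m) (hβ : ∀ x ∈ β, m < x)
    (aγ : Av231 γ) (aβ : Av231 β) : Av231 (m :: (γ ++ β)) := by
  intro a b c hsub ⟨hca, hab⟩
  rcases List.sublist_cons_iff.mp hsub with h | ⟨r, hr, h⟩
  · obtain ⟨u, v, huv, hu, hv⟩ := List.sublist_append_iff.mp h
    rcases u with _ | ⟨a1, u⟩
    · simp only [List.nil_append] at huv
      subst huv
      exact aβ a b c hv ⟨hca, hab⟩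
    rcases u with _ | ⟨a2, u⟩
    · simp only [List.cons_append, List.cons.injEq, List.nil_append] at huv
      obtain ⟨rfl, huv⟩ := huv
      subst huv
      have ha : a ∈ γ := hu.subset (List.mem_cons_self)
      have hc : c ∈ β := hv.subset (List.mem_cons_of_mem _ (List.mem_cons_self))
      exact absurd hca (not_lt_of_gt ((hγ a ha).trans (hβ c hc)))
    rcases u with _ | ⟨a3, u⟩
    · simp only [List.cons_append, List.cons.injEq, List.nil_append] at huv
      obtain ⟨rfl, rfl, huv⟩ := huv
      subst huv
      have ha : a ∈ γ := hu.subset (List.mem_cons_self)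
      have hc : c ∈ β := hv.subset (List.mem_cons_self)
      exact absurd hca (not_lt_of_gt ((hγ a ha).trans (hβ c hc)))
    · have hlen := congrArg List.length huv
      simp only [List.length_cons, List.length_append, List.length_nil] at hlen
      have hu0 : u = [] := List.eq_nil_of_length_eq_zero (by omega)
      have hv0 : v = [] := List.eq_nil_of_length_eq_zero (by omega)
      subst hu0; subst hv0
      simp only [List.append_nil] at huv
      obtain ⟨rfl, rfl, rfl⟩ : a1 = a ∧ a2 = b ∧ a3 = c := by simpa using huv.symm
      exact aγ _ _ _ hu ⟨hca, hab⟩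
  · obtain ⟨rfl, hbc⟩ : m = a ∧ r = [b, c] := by simpa [List.cons.injEq] using hr.symm
    subst hbc
    obtain ⟨u, v, huv, hu, hv⟩ := List.sublist_append_iff.mp h
    rcases u with _ | ⟨b1, u⟩
    · simp only [List.nil_append] at huv
      subst huv
      have hc : c ∈ β := hv.subset (List.mem_cons_of_mem _ (List.mem_cons_self))
      exact absurd hca (not_lt_of_gt (hβ c hc))
    rcases u with _ | ⟨b2, u⟩
    · simp only [List.cons_append, List.cons.injEq, List.nil_append] at huv
      obtain ⟨rfl, huv⟩ := huv
      subst huv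
      have hc : c ∈ β := hv.subset (List.mem_cons_self)
      exact absurd hca (not_lt_of_gt (hβ c hc))
    · simp only [List.cons_append, List.cons.injEq] at huv
      obtain ⟨rfl, rfl, huv⟩ := huv
      have hb : b ∈ γ := hu.subset (List.mem_cons_self)
      exact absurd hab (not_lt_of_gt (hγ b hb))

theorem phiL_avoid : ∀ (l : List α), l.Nodup → Av231 l → Av213 (phiL l)
  | [] => fun _ _ => by rw [phiL]; intro a b c h; cases h <;> simp_all [List.sublist_nil]
  | m :: rest => fun hnd hav => by
      rw [List.nodup_cons] at hnd
      have hndB := hnd.2.filter (fun x => decide (m < x))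
      have hndA := hnd.2.filter (fun x => decide (x < m))
      have havB : Av231 (rest.filter (fun x => m < x)) :=
        hav.sublist ((List.filter_sublist (l := rest)).trans (rest.sublist_cons_self m))
      have havA : Av231 (rest.filter (fun x => x < m)) :=
        hav.sublist ((List.filter_sublist (l := rest)).trans (rest.sublist_cons_self m))
      rw [phiL]
      refine build213 ?_ ?_ (phiL_avoid _ hndB havB) (phiL_avoid _ hndA havA)
      · intro x hx
        simpa using List.of_mem_filter (mem_of_mem_phiL hndB hx)
      · intro x hx
        simpa using List.of_mem_filter (mem_of_mem_phiL hndA hx)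
  termination_by l => l.length
  decreasing_by
    all_goals simp only [List.length_cons]; exact Nat.lt_succ_of_le (List.length_filter_le _ _)

theorem psiL_avoid : ∀ (l : List α), l.Nodup → Av213 l → Av231 (psiL l)
  | [] => fun _ _ => by rw [psiL]; intro a b c h; cases h <;> simp_all [List.sublist_nil]
  | m :: rest => fun hnd hav => by
      rw [List.nodup_cons] at hnd
      have hndB := hnd.2.filter (fun x => decide (m < x))
      have hndA := hnd.2.filter (fun x => decide (x < m))
      have havB : Av213 (rest.filter (fun x => m < x)) :=
        hav.sublist ((List.filter_sublist (l := rest)).trans (rest.sublist_cons_self m))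
      have havA : Av213 (rest.filter (fun x => x < m)) :=
        hav.sublist ((List.filter_sublist (l := rest)).trans (rest.sublist_cons_self m))
      rw [psiL]
      refine build231 ?_ ?_ (psiL_avoid _ hndA havA) (psiL_avoid _ hndB havB)
      · intro x hx
        simpa using List.of_mem_filter (mem_of_mem_psiL hndA hx)
      · intro x hx
        simpa using List.of_mem_filter (mem_of_mem_psiL hndB hx)
  termination_by l => l.length
  decreasing_by
    all_goals simp only [List.length_cons]; exact Nat.lt_succ_of_le (List.length_filter_le _ _)

theorem psiL_phiL : ∀ (l : List α), l.Nodup → Av231 l → psiL (phiL l) = l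
  | [] => fun _ _ => by rw [phiL, psiL]
  | m :: rest => fun hnd hav => by
      rw [List.nodup_cons] at hnd
      have hndB := hnd.2.filter (fun x => decide (m < x))
      have hndA := hnd.2.filter (fun x => decide (x < m))
      have havB : Av231 (rest.filter (fun x => m < x)) :=
        hav.sublist ((List.filter_sublist (l := rest)).trans (rest.sublist_cons_self m))
      have havA : Av231 (rest.filter (fun x => x < m)) :=
        hav.sublist ((List.filter_sublist (l := rest)).trans (rest.sublist_cons_self m))
      rw [phiL, psiL, List.filter_append, List.filter_append]
      have e1 : (phiL (rest.filter (fun x => m < x))).filter (fun x => x < m) = [] := by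
        refine List.filter_eq_nil_iff.mpr (fun x hx => ?_)
        have : m < x := by simpa using List.of_mem_filter (mem_of_mem_phiL hndB hx)
        simp [not_lt_of_gt this]
      have e2 : (phiL (rest.filter (fun x => x < m))).filter (fun x => x < m)
          = phiL (rest.filter (fun x => x < m)) := by
        refine List.filter_eq_self.mpr (fun x hx => ?_)
        simpa using List.of_mem_filter (mem_of_mem_phiL hndA hx)
      have e3 : (phiL (rest.filter (fun x => m < x))).filter (fun x => m < x)
          = phiL (rest.filter (fun x => m < x)) := by
        refine List.filter_eq_self.mpr (fun x hx => ?_)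
        simpa using List.of_mem_filter (mem_of_mem_phiL hndB hx)
      have e4 : (phiL (rest.filter (fun x => x < m))).filter (fun x => m < x) = [] := by
        refine List.filter_eq_nil_iff.mpr (fun x hx => ?_)
        have : x < m := by simpa using List.of_mem_filter (mem_of_mem_phiL hndA hx)
        simp [not_lt_of_gt this]
      rw [e1, e2, e3, e4, List.nil_append, List.append_nil,
        psiL_phiL _ hndA havA, psiL_phiL _ hndB havB]
      exact congrArg (m :: ·) (split231 hav hnd.1).symm
  termination_by l => l.length
  decreasing_by
    all_goals simp only [List.length_cons]; exact Nat.lt_succ_of_le (List.length_filter_le _ _)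

theorem phiL_psiL : ∀ (l : List α), l.Nodup → Av213 l → phiL (psiL l) = l
  | [] => fun _ _ => by rw [psiL, phiL]
  | m :: rest => fun hnd hav => by
      rw [List.nodup_cons] at hnd
      have hndB := hnd.2.filter (fun x => decide (m < x))
      have hndA := hnd.2.filter (fun x => decide (x < m))
      have havB : Av213 (rest.filter (fun x => m < x)) :=
        hav.sublist ((List.filter_sublist (l := rest)).trans (rest.sublist_cons_self m))
      have havA : Av213 (rest.filter (fun x => x < m)) :=
        hav.sublist ((List.filter_sublist (l := rest)).trans (rest.sublist_cons_self m))
      rw [psiL, phiL, List.filter_append, List.filter_append]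
      have e1 : (psiL (rest.filter (fun x => x < m))).filter (fun x => m < x) = [] := by
        refine List.filter_eq_nil_iff.mpr (fun x hx => ?_)
        have : x < m := by simpa using List.of_mem_filter (mem_of_mem_psiL hndA hx)
        simp [not_lt_of_gt this]
      have e2 : (psiL (rest.filter (fun x => m < x))).filter (fun x => m < x)
          = psiL (rest.filter (fun x => m < x)) := by
        refine List.filter_eq_self.mpr (fun x hx => ?_)
        simpa using List.of_mem_filter (mem_of_mem_psiL hndB hx)
      have e3 : (psiL (rest.filter (fun x => x < m))).filter (fun x => x < m)
          = psiL (rest.filter (fun x => x < m)) := by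
        refine List.filter_eq_self.mpr (fun x hx => ?_)
        simpa using List.of_mem_filter (mem_of_mem_psiL hndA hx)
      have e4 : (psiL (rest.filter (fun x => m < x))).filter (fun x => x < m) = [] := by
        refine List.filter_eq_nil_iff.mpr (fun x hx => ?_)
        have : m < x := by simpa using List.of_mem_filter (mem_of_mem_psiL hndB hx)
        simp [not_lt_of_gt this]
      rw [e1, e2, e3, e4, List.nil_append, List.append_nil,
        phiL_psiL _ hndB havB, phiL_psiL _ hndA havA]
      exact congrArg (m :: ·) (split213 hav hnd.1).symm
  termination_by l => l.length
  decreasing_by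
    all_goals simp only [List.length_cons]; exact Nat.lt_succ_of_le (List.length_filter_le _ _)

theorem lrmL_sublist : ∀ (l : List α), lrmL l <+ l
  | [] => by rw [lrmL]
  | m :: rest => by
      rw [lrmL]
      exact ((lrmL_sublist _).trans (List.filter_sublist (l := rest))).cons₂ m
  termination_by l => l.length
  decreasing_by
    simp only [List.length_cons]; exact Nat.lt_succ_of_le (List.length_filter_le _ _)

theorem filter_eq_append_cons {p : α → Bool} :
    ∀ {l l₁ l₂ : List α} {x : α}, l.filter p = l₁ ++ x :: l₂ →
      ∃ r₁ r₂, l = r₁ ++ x :: r₂ ∧ r₁.filter p = l₁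
  | [], l₁, l₂, x, h => by simp at h
  | y :: t, l₁, l₂, x, h => by
      rw [List.filter_cons] at h
      by_cases hy : p y
      · rw [if_pos hy] at h
        rcases l₁ with _ | ⟨z, l₁⟩
        · simp only [List.nil_append, List.cons.injEq] at h
          exact ⟨[], t, by rw [h.1]; simp, by simp⟩
        · simp only [List.cons_append, List.cons.injEq] at h
          obtain ⟨rfl, h⟩ := h
          obtain ⟨r₁, r₂, hl, hf⟩ := filter_eq_append_cons h
          exact ⟨y :: r₁, r₂, by rw [hl]; simp, by rw [List.filter_cons, if_pos hy, hf]⟩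
      · rw [if_neg hy] at h
        obtain ⟨r₁, r₂, hl, hf⟩ := filter_eq_append_cons h
        exact ⟨y :: r₁, r₂, by rw [hl]; simp, by rw [List.filter_cons, if_neg hy, hf]⟩

theorem mem_lrmL_iff : ∀ (l : List α) (x : α),
    x ∈ lrmL l ↔ ∃ l₁ l₂, l = l₁ ++ x :: l₂ ∧ ∀ y ∈ l₁, y < x
  | [], x => by rw [lrmL]; simp
  | m :: rest, x => by
      rw [lrmL]
      constructor
      · intro hx
        rcases List.mem_cons.mp hx with rfl | hx
        · exact ⟨[], rest, rfl, by simp⟩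
        · have hmem : x ∈ rest.filter (fun z => m < z) := (lrmL_sublist _).subset hx
          have hmx : m < x := by simpa using List.of_mem_filter hmem
          obtain ⟨f₁, f₂, hf, hlt⟩ := (mem_lrmL_iff _ x).mp hx
          obtain ⟨r₁, r₂, hl, hr⟩ := filter_eq_append_cons hf
          refine ⟨m :: r₁, r₂, by rw [hl]; simp, ?_⟩
          intro y hy
          rcases List.mem_cons.mp hy with rfl | hy
          · exact hmx
          · by_cases hmy : m < y
            · refine hlt y ?_
              rw [← hr]
              exact List.mem_filter.mpr ⟨hy, by simpa using hmy⟩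
            · exact lt_of_le_of_lt (le_of_not_gt hmy) hmx
      · rintro ⟨l₁, l₂, hl, hlt⟩
        rcases l₁ with _ | ⟨z, l₁⟩
        · simp only [List.nil_append, List.cons.injEq] at hl
          exact List.mem_cons.mpr (Or.inl hl.1.symm)
        · simp only [List.cons_append, List.cons.injEq] at hl
          obtain ⟨rfl, hl⟩ := hl
          have hmx : m < x := hlt m (List.mem_cons_self)
          refine List.mem_cons.mpr (Or.inr ?_)
          refine (mem_lrmL_iff _ x).mpr ?_
          refine ⟨l₁.filter (fun z => m < z), l₂.filter (fun z => m < z), ?_, ?_⟩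
          · rw [hl, List.filter_append, List.filter_cons, if_pos (by simpa using hmx)]
          · intro y hy
            exact hlt y (List.mem_cons_of_mem _ (List.mem_filter.mp hy).1)
  termination_by l => l.length
  decreasing_by
    all_goals simp only [List.length_cons]; exact Nat.lt_succ_of_le (List.length_filter_le _ _)


section Index

variable {β : Type*}

theorem drop_sublist_drop (l : List β) {m n : ℕ} (hmn : m ≤ n) : l.drop n <+ l.drop m := by
  have : l.drop n = List.drop (n - m) (l.drop m) := by
    rw [List.drop_drop]
    congr 1
    omega
  rw [this]
  exact List.drop_sublist _ _

theorem single_index {l : List β} {a : β} (h : [a] <+ l) :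
    ∃ i, ∃ _ : i < l.length, l[i] = a := by
  have : a ∈ l := h.subset (List.mem_singleton_self a)
  simpa using List.mem_iff_getElem.mp this

theorem pair_index {l : List β} {a b : β} (h : [a, b] <+ l) :
    ∃ i j, ∃ _ : i < j, ∃ hj : j < l.length,
      l[i]'(by omega) = a ∧ l[j] = b := by
  induction l with
  | nil => simp at h
  | cons x t ih =>
      rcases List.sublist_cons_iff.mp h with h' | ⟨r, hr, h'⟩
      · obtain ⟨i, j, hij, hj, ha, hb⟩ := ih h'
        exact ⟨i + 1, j + 1, by omega, by simp; omega,
          by simpa using ha, by simpa using hb⟩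
      · obtain ⟨rfl, rfl⟩ : x = a ∧ r = [b] := by simpa using hr.symm
        obtain ⟨j, hj, hb⟩ := single_index h'
        exact ⟨0, j + 1, by omega, by simp; omega, rfl, by simpa using hb⟩

theorem triple_index {l : List β} {a b c : β} (h : [a, b, c] <+ l) :
    ∃ i j k, ∃ _ : i < j, ∃ _ : j < k, ∃ hk : k < l.length,
      l[i]'(by omega) = a ∧ l[j]'(by omega) = b ∧ l[k] = c := by
  induction l with
  | nil => simp at h
  | cons x t ih =>
      rcases List.sublist_cons_iff.mp h with h' | ⟨r, hr, h'⟩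
      · obtain ⟨i, j, k, hij, hjk, hk, ha, hb, hc⟩ := ih h'
        exact ⟨i + 1, j + 1, k + 1, by omega, by omega, by simp; omega,
          by simpa using ha, by simpa using hb, by simpa using hc⟩
      · obtain ⟨rfl, rfl⟩ : x = a ∧ r = [b, c] := by simpa using hr.symm
        obtain ⟨j, k, hjk, hk, hb, hc⟩ := pair_index h'
        exact ⟨0, j + 1, k + 1, by omega, by omega, by simp; omega,
          rfl, by simpa using hb, by simpa using hc⟩

theorem triple_sublist {l : List β} {i j k : ℕ} (hij : i < j) (hjk : j < k)
    (hk : k < l.length) :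
    [l[i]'(by omega), l[j]'(by omega), l[k]] <+ l := by
  have hc : ∀ (m : ℕ) (hm : m < l.length), l.drop m = l[m] :: l.drop (m + 1) :=
    fun m hm => (List.getElem_cons_drop hm).symm
  have h3 : [l[k]] <+ l.drop k := by
    rw [hc k hk]
    exact (List.nil_sublist _).cons₂ _
  have h2 : [l[j]'(by omega), l[k]] <+ l.drop j := by
    rw [hc j (by omega)]
    exact (h3.trans (drop_sublist_drop l (by omega))).cons₂ _
  have h1 : [l[i]'(by omega), l[j]'(by omega), l[k]] <+ l.drop i := by
    rw [hc i (by omega)]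
    exact (h2.trans (drop_sublist_drop l (by omega))).cons₂ _
  exact h1.trans (List.drop_sublist _ _)

end Index

section Bridge

variable {N : ℕ}

theorem permOfFn_getElem (π : Equiv.Perm (Fin N)) (i : ℕ) (hi : i < (List.ofFn (⇑π)).length) :
    (List.ofFn (⇑π))[i] = π ⟨i, by simpa using hi⟩ := by
  simp [List.getElem_ofFn]

theorem avoids231_iff (π : Equiv.Perm (Fin N)) :
    Avoids231 π ↔ Av231 (List.ofFn π) := by
  constructor
  · intro h a b c hsub hpat
    obtain ⟨i, j, k, hij, hjk, hk, ha, hb, hc⟩ := triple_index hsub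
    rw [permOfFn_getElem] at ha hb hc
    have hkN : k < N := by simpa using hk
    refine h ⟨i, by omega⟩ ⟨j, by omega⟩ ⟨k, by omega⟩ hij hjk ?_
    rw [ha, hb, hc]
    exact hpat
  · intro h i j k hij hjk hpat
    have hk : (k : ℕ) < (List.ofFn (⇑π)).length := by simp
    have hsub := triple_sublist (l := List.ofFn (⇑π)) (i := i) (j := j) (k := k) hij hjk hk
    rw [permOfFn_getElem, permOfFn_getElem, permOfFn_getElem] at hsub
    simp only [Fin.eta] at hsub
    exact h (π i) (π j) (π k) hsub hpat

theorem avoids213_iff (π : Equiv.Perm (Fin N)) :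
    Avoids213 π ↔ Av213 (List.ofFn π) := by
  constructor
  · intro h a b c hsub hpat
    obtain ⟨i, j, k, hij, hjk, hk, ha, hb, hc⟩ := triple_index hsub
    rw [permOfFn_getElem] at ha hb hc
    have hkN : k < N := by simpa using hk
    refine h ⟨i, by omega⟩ ⟨j, by omega⟩ ⟨k, by omega⟩ hij hjk ?_
    rw [ha, hb, hc]
    exact hpat
  · intro h i j k hij hjk hpat
    have hk : (k : ℕ) < (List.ofFn (⇑π)).length := by simp
    have hsub := triple_sublist (l := List.ofFn (⇑π)) (i := i) (j := j) (k := k) hij hjk hk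
    rw [permOfFn_getElem, permOfFn_getElem, permOfFn_getElem] at hsub
    simp only [Fin.eta] at hsub
    exact h (π i) (π j) (π k) hsub hpat

end Bridge


section Bridge2

variable {N : ℕ}

theorem mem_lrmValues_iff (π : Equiv.Perm (Fin N)) (x : Fin N) :
    x ∈ lrmValues π ↔
      ∃ l₁ l₂, List.ofFn (⇑π) = l₁ ++ x :: l₂ ∧ ∀ y ∈ l₁, y < x := by
  have hlen : (List.ofFn (⇑π)).length = N := by simp
  constructor
  · intro hx
    simp only [lrmValues, Finset.mem_image, Finset.mem_filter, Finset.mem_univ,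
      true_and] at hx
    obtain ⟨j, hj, rfl⟩ := hx
    refine ⟨(List.ofFn (⇑π)).take j, (List.ofFn (⇑π)).drop (j + 1), ?_, ?_⟩
    · have hj' : (j : ℕ) < (List.ofFn (⇑π)).length := by omega
      have hxj : π j = (List.ofFn (⇑π))[(j : ℕ)] := (permOfFn_getElem π _ hj').symm
      rw [hxj, List.getElem_cons_drop, List.take_append_drop]
    · intro y hy
      obtain ⟨i, hi, hiy⟩ := List.mem_iff_getElem.mp hy
      have hij : i < (j : ℕ) := by
        simp only [List.length_take] at hi
        omega
      have : y = π ⟨i, by omega⟩ := by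
        rw [← hiy, List.getElem_take, permOfFn_getElem π i (by omega)]
      rw [this]
      exact hj ⟨i, by omega⟩ (by simpa [Fin.lt_def] using hij)
  · rintro ⟨l₁, l₂, hdec, hlt⟩
    have hjN : l₁.length < N := by
      have := congrArg List.length hdec
      simp only [hlen, List.length_append, List.length_cons] at this
      omega
    have hx : π ⟨l₁.length, hjN⟩ = x := by
      have h1 := (permOfFn_getElem π l₁.length (by omega)).symm
      rw [List.getElem_of_eq hdec (by omega)] at h1
      rw [h1, List.getElem_append_right (le_refl l₁.length)]
      simp
    simp only [lrmValues, Finset.mem_image, Finset.mem_filter, Finset.mem_univ,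
      true_and]
    refine ⟨⟨l₁.length, hjN⟩, ?_, hx⟩
    intro i hi
    have hil : (i : ℕ) < l₁.length := hi
    have hmem : π i ∈ l₁ := by
      have h1 := (permOfFn_getElem π (i : ℕ) (by omega)).symm
      rw [List.getElem_of_eq hdec (by omega),
        List.getElem_append_left (by omega)] at h1
      have : π i = π ⟨(i : ℕ), i.isLt⟩ := rfl
      rw [this, h1]
      exact List.getElem_mem _
    rw [hx]
    exact hlt _ hmem

theorem lrmValues_eq_toFinset (π : Equiv.Perm (Fin N)) :
    lrmValues π = (lrmL (List.ofFn (⇑π))).toFinset := by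
  ext x
  rw [mem_lrmValues_iff, List.mem_toFinset, mem_lrmL_iff]

noncomputable def permOfList (l : List (Fin N)) (hl : l.length = N) (hnd : l.Nodup) :
    Equiv.Perm (Fin N) :=
  Equiv.ofBijective (fun i => l.get (Fin.cast hl.symm i))
    (Finite.injective_iff_bijective.mp
      (fun i j hij => by
        have := List.nodup_iff_injective_get.mp hnd hij
        simpa [Fin.ext_iff] using this))

theorem ofFn_permOfList (l : List (Fin N)) (hl : l.length = N) (hnd : l.Nodup) :
    List.ofFn (⇑(permOfList l hl hnd)) = l := by
  apply List.ext_getElem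
  · simp [hl]
  · intro i h1 h2
    rw [permOfFn_getElem]
    simp [permOfList, Equiv.ofBijective]

end Bridge2


section Final

variable {N : ℕ}

theorem list_ofFn_nodup (π : Equiv.Perm (Fin N)) : (List.ofFn (⇑π)).Nodup :=
  List.nodup_ofFn.mpr π.injective

theorem permOfList_eq (l : List (Fin N)) (hl : l.length = N) (hnd : l.Nodup)
    (e : Equiv.Perm (Fin N)) (h : List.ofFn (⇑e) = l) : permOfList l hl hnd = e := by
  have h2 : List.ofFn (⇑(permOfList l hl hnd)) = List.ofFn (⇑e) := by
    rw [ofFn_permOfList, h]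
  exact Equiv.coe_fn_injective (List.ofFn_inj.mp h2)

theorem phiL_ofFn_length (π : Equiv.Perm (Fin N)) : (phiL (List.ofFn (⇑π))).length = N :=
  ((phiL_perm _ (list_ofFn_nodup π)).length_eq).trans (by simp)

theorem phiL_ofFn_nodup (π : Equiv.Perm (Fin N)) : (phiL (List.ofFn (⇑π))).Nodup :=
  ((phiL_perm _ (list_ofFn_nodup π)).nodup_iff).mpr (list_ofFn_nodup π)

theorem psiL_ofFn_length (π : Equiv.Perm (Fin N)) : (psiL (List.ofFn (⇑π))).length = N :=
  ((psiL_perm _ (list_ofFn_nodup π)).length_eq).trans (by simp)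

theorem psiL_ofFn_nodup (π : Equiv.Perm (Fin N)) : (psiL (List.ofFn (⇑π))).Nodup :=
  ((psiL_perm _ (list_ofFn_nodup π)).nodup_iff).mpr (list_ofFn_nodup π)

noncomputable def F231 (p : {π : Equiv.Perm (Fin N) // Avoids231 π}) :
    {π : Equiv.Perm (Fin N) // Avoids213 π} :=
  ⟨permOfList (phiL (List.ofFn (⇑p.1))) (phiL_ofFn_length p.1) (phiL_ofFn_nodup p.1),
    by
      rw [avoids213_iff, ofFn_permOfList]
      exact phiL_avoid _ (list_ofFn_nodup p.1) ((avoids231_iff _).mp p.2)⟩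

noncomputable def G213 (p : {π : Equiv.Perm (Fin N) // Avoids213 π}) :
    {π : Equiv.Perm (Fin N) // Avoids231 π} :=
  ⟨permOfList (psiL (List.ofFn (⇑p.1))) (psiL_ofFn_length p.1) (psiL_ofFn_nodup p.1),
    by
      rw [avoids231_iff, ofFn_permOfList]
      exact psiL_avoid _ (list_ofFn_nodup p.1) ((avoids213_iff _).mp p.2)⟩

theorem ofFn_F231 (p : {π : Equiv.Perm (Fin N) // Avoids231 π}) :
    List.ofFn (⇑(F231 p).1) = phiL (List.ofFn (⇑p.1)) :=
  ofFn_permOfList _ (phiL_ofFn_length p.1) (phiL_ofFn_nodup p.1)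

theorem ofFn_G213 (p : {π : Equiv.Perm (Fin N) // Avoids213 π}) :
    List.ofFn (⇑(G213 p).1) = psiL (List.ofFn (⇑p.1)) :=
  ofFn_permOfList _ (psiL_ofFn_length p.1) (psiL_ofFn_nodup p.1)

theorem G_F (p : {π : Equiv.Perm (Fin N) // Avoids231 π}) : G213 (F231 p) = p := by
  refine Subtype.ext ?_
  refine permOfList_eq _ (psiL_ofFn_length (F231 p).1) (psiL_ofFn_nodup (F231 p).1) _ ?_
  rw [ofFn_F231]
  exact (psiL_phiL _ (list_ofFn_nodup p.1) ((avoids231_iff _).mp p.2)).symm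

theorem F_G (p : {π : Equiv.Perm (Fin N) // Avoids213 π}) : F231 (G213 p) = p := by
  refine Subtype.ext ?_
  refine permOfList_eq _ (phiL_ofFn_length (G213 p).1) (phiL_ofFn_nodup (G213 p).1) _ ?_
  rw [ofFn_G213]
  exact (phiL_psiL _ (list_ofFn_nodup p.1) ((avoids213_iff _).mp p.2)).symm

theorem lrm_F (p : {π : Equiv.Perm (Fin N) // Avoids231 π}) :
    lrmValues (F231 p).1 = lrmValues p.1 := by
  rw [lrmValues_eq_toFinset, lrmValues_eq_toFinset, ofFn_F231,
    lrmL_phiL _ (list_ofFn_nodup p.1)]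

end Final

end MyAux

theorem stmt10 (N : ℕ) (hN : 1 ≤ N) :
    ∃ f : {π : Equiv.Perm (Fin N) // Avoids231 π} ≃
          {π : Equiv.Perm (Fin N) // Avoids213 π},
      ∀ π : {π : Equiv.Perm (Fin N) // Avoids231 π},
        lrmValues ((f π) : Equiv.Perm (Fin N)) = lrmValues (π : Equiv.Perm (Fin N)) := by
  exact ⟨⟨F231, G213, G_F, F_G⟩, lrm_F⟩
end

section
/- For each k with 1 <= k <= N, the number of 231-avoiding permutations of {1,...,N} with exactly k left-to-right maxima equals the number of 213-avoiding permutations of {1,...,N} with exactly k left-to-right maxima. -/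
open Finset

namespace Stmt11Aux

/-- number of left-to-right minima -/
def lrminCount {N : ℕ} (π : Equiv.Perm (Fin N)) : ℕ :=
  (Finset.univ.filter (fun j : Fin N => ∀ i, i < j → π j < π i)).card

def cntMax (n k : ℕ) : ℕ :=
  (Finset.univ.filter (fun π : Equiv.Perm (Fin n) => Avoids231 π ∧ lrmCount π = k)).card

def cntMin (n k : ℕ) : ℕ :=
  (Finset.univ.filter (fun π : Equiv.Perm (Fin n) => Avoids231 π ∧ lrminCount π = k)).card

def cntAll (n : ℕ) : ℕ :=
  (Finset.univ.filter (fun π : Equiv.Perm (Fin n) => Avoids231 π)).card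

section Emb

variable (n m : ℕ) (hm : m ≤ n) (σ : Equiv.Perm (Fin m)) (τ : Equiv.Perm (Fin (n - m)))

def embFun (i : Fin (n + 1)) : Fin (n + 1) :=
  if h0 : (i : ℕ) = 0 then ⟨m, by omega⟩
  else if h1 : (i : ℕ) ≤ m then
    ⟨(σ ⟨(i : ℕ) - 1, by omega⟩ : ℕ), by
      have := (σ ⟨(i : ℕ) - 1, by omega⟩).isLt; omega⟩
  else
    ⟨m + 1 + (τ ⟨(i : ℕ) - (m + 1), by have := i.isLt; omega⟩ : ℕ), by
      have := (τ ⟨(i : ℕ) - (m + 1), by have := i.isLt; omega⟩).isLt; omega⟩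

lemma embFun_zero' (i : Fin (n + 1)) (h0 : (i : ℕ) = 0) :
    (embFun n m hm σ τ i : ℕ) = m := by
  simp [embFun, h0]

lemma embFun_low' (i : Fin (n + 1)) (h0 : (i : ℕ) ≠ 0) (h1 : (i : ℕ) ≤ m) :
    (embFun n m hm σ τ i : ℕ) = σ ⟨(i : ℕ) - 1, by omega⟩ := by
  simp [embFun, h0, h1]

lemma embFun_high' (i : Fin (n + 1)) (h1 : m < (i : ℕ)) :
    (embFun n m hm σ τ i : ℕ) = m + 1 + τ ⟨(i : ℕ) - (m + 1), by have := i.isLt; omega⟩ := by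
  have h0 : (i : ℕ) ≠ 0 := by omega
  simp [embFun, h0, h1, Nat.not_le.mpr h1]

lemma embFun_injective : Function.Injective (embFun n m hm σ τ) := by
  intro a b hab
  have hv : (embFun n m hm σ τ a : ℕ) = embFun n m hm σ τ b := by rw [hab]
  have ha := a.isLt
  have hb := b.isLt
  rcases Nat.eq_zero_or_pos (a : ℕ) with ha0 | ha0 <;>
    rcases Nat.eq_zero_or_pos (b : ℕ) with hb0 | hb0
  · exact Fin.ext (by omega)
  · rw [embFun_zero' n m hm σ τ a ha0] at hv
    rcases le_or_gt (b : ℕ) m with hb1 | hb1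
    · rw [embFun_low' n m hm σ τ b (by omega) hb1] at hv
      have := (σ ⟨(b : ℕ) - 1, by omega⟩).isLt; omega
    · rw [embFun_high' n m hm σ τ b hb1] at hv; omega
  · rw [embFun_zero' n m hm σ τ b hb0] at hv
    rcases le_or_gt (a : ℕ) m with ha1 | ha1
    · rw [embFun_low' n m hm σ τ a (by omega) ha1] at hv
      have := (σ ⟨(a : ℕ) - 1, by omega⟩).isLt; omega
    · rw [embFun_high' n m hm σ τ a ha1] at hv; omega
  · rcases le_or_gt (a : ℕ) m with ha1 | ha1 <;>
      rcases le_or_gt (b : ℕ) m with hb1 | hb1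
    · rw [embFun_low' n m hm σ τ a (by omega) ha1,
        embFun_low' n m hm σ τ b (by omega) hb1] at hv
      have := σ.injective (Fin.ext hv : σ ⟨(a:ℕ)-1, by omega⟩ = σ ⟨(b:ℕ)-1, by omega⟩)
      have := congrArg Fin.val this
      simp only at this
      exact Fin.ext (by omega)
    · rw [embFun_low' n m hm σ τ a (by omega) ha1,
        embFun_high' n m hm σ τ b hb1] at hv
      have := (σ ⟨(a : ℕ) - 1, by omega⟩).isLt; omega
    · rw [embFun_low' n m hm σ τ b (by omega) hb1,
        embFun_high' n m hm σ τ a ha1] at hv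
      have := (σ ⟨(b : ℕ) - 1, by omega⟩).isLt; omega
    · rw [embFun_high' n m hm σ τ a ha1, embFun_high' n m hm σ τ b hb1] at hv
      have hv' : (τ ⟨(a:ℕ)-(m+1), by omega⟩ : ℕ) = τ ⟨(b:ℕ)-(m+1), by omega⟩ := by omega
      have := τ.injective (Fin.ext hv' : τ ⟨(a:ℕ)-(m+1), by omega⟩ = τ ⟨(b:ℕ)-(m+1), by omega⟩)
      have := congrArg Fin.val this
      simp only at this
      exact Fin.ext (by omega)

noncomputable def embPerm : Equiv.Perm (Fin (n + 1)) :=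
  Equiv.ofBijective _ ((Finite.injective_iff_bijective).mp (embFun_injective n m hm σ τ))

lemma embPerm_apply (i : Fin (n + 1)) : embPerm n m hm σ τ i = embFun n m hm σ τ i := rfl

end Emb

attribute [irreducible] embFun embPerm

end Stmt11Aux

namespace Stmt11Aux

section Emb2

variable (n m : ℕ) (hm : m ≤ n) (σ : Equiv.Perm (Fin m)) (τ : Equiv.Perm (Fin (n - m)))

lemma embFun_low (x : Fin m) :
    (embFun n m hm σ τ ⟨(x : ℕ) + 1, by have := x.isLt; omega⟩ : ℕ) = σ x := by
  have h := embFun_low' n m hm σ τ ⟨(x : ℕ) + 1, by have := x.isLt; omega⟩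
    (by simp) (by have := x.isLt; simp)
  rw [h]
  congr 1 <;> first | (apply Fin.ext; simp) | simp | omega

lemma embFun_high (x : Fin (n - m)) :
    (embFun n m hm σ τ ⟨m + 1 + (x : ℕ), by have := x.isLt; omega⟩ : ℕ) = m + 1 + τ x := by
  have h := embFun_high' n m hm σ τ ⟨m + 1 + (x : ℕ), by have := x.isLt; omega⟩ (by simp; omega)
  rw [h]
  congr 2 <;> first | (apply Fin.ext; simp) | simp | omega

lemma embFun_gt_iff (i : Fin (n + 1)) :
    m < (embFun n m hm σ τ i : ℕ) ↔ m < (i : ℕ) := by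
  rcases Nat.eq_zero_or_pos (i : ℕ) with h0 | h0
  · rw [embFun_zero' n m hm σ τ i h0]; omega
  rcases le_or_gt (i : ℕ) m with h1 | h1
  · rw [embFun_low' n m hm σ τ i (by omega) h1]
    have := (σ ⟨(i : ℕ) - 1, by omega⟩).isLt; omega
  · rw [embFun_high' n m hm σ τ i h1]; omega

lemma embFun_lt_iff (i : Fin (n + 1)) :
    (embFun n m hm σ τ i : ℕ) < m ↔ 0 < (i : ℕ) ∧ (i : ℕ) ≤ m := by
  rcases Nat.eq_zero_or_pos (i : ℕ) with h0 | h0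
  · rw [embFun_zero' n m hm σ τ i h0]; omega
  rcases le_or_gt (i : ℕ) m with h1 | h1
  · rw [embFun_low' n m hm σ τ i (by omega) h1]
    have := (σ ⟨(i : ℕ) - 1, by omega⟩).isLt; omega
  · rw [embFun_high' n m hm σ τ i h1]; omega

set_option maxHeartbeats 1000000 in
lemma avoids_embPerm :
    Avoids231 (embPerm n m hm σ τ) ↔ Avoids231 σ ∧ Avoids231 τ := by
  constructor
  · intro H
    constructor
    · intro x y z hxy hyz hpat
      have hx := x.isLt; have hy := y.isLt; have hz := z.isLt
      refine H ⟨(x : ℕ) + 1, by omega⟩ ⟨(y : ℕ) + 1, by omega⟩ ⟨(z : ℕ) + 1, by omega⟩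
        (by rw [Fin.mk_lt_mk]; have := Fin.lt_def.mp hxy; omega)
        (by rw [Fin.mk_lt_mk]; have := Fin.lt_def.mp hyz; omega) ?_
      constructor
      · rw [Fin.lt_def]
        simp only [embPerm_apply]
        rw [embFun_low n m hm σ τ x, embFun_low n m hm σ τ z]
        exact Fin.lt_def.mp hpat.1
      · rw [Fin.lt_def]
        simp only [embPerm_apply]
        rw [embFun_low n m hm σ τ x, embFun_low n m hm σ τ y]
        exact Fin.lt_def.mp hpat.2
    · intro x y z hxy hyz hpat
      have hx := x.isLt; have hy := y.isLt; have hz := z.isLt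
      refine H ⟨m + 1 + (x : ℕ), by omega⟩ ⟨m + 1 + (y : ℕ), by omega⟩
        ⟨m + 1 + (z : ℕ), by omega⟩
        (by rw [Fin.mk_lt_mk]; have := Fin.lt_def.mp hxy; omega)
        (by rw [Fin.mk_lt_mk]; have := Fin.lt_def.mp hyz; omega) ?_
      constructor
      · rw [Fin.lt_def]
        simp only [embPerm_apply]
        rw [embFun_high n m hm σ τ x, embFun_high n m hm σ τ z]
        have := Fin.lt_def.mp hpat.1; omega
      · rw [Fin.lt_def]
        simp only [embPerm_apply]
        rw [embFun_high n m hm σ τ x, embFun_high n m hm σ τ y]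
        have := Fin.lt_def.mp hpat.2; omega
  · rintro ⟨hσ, hτ⟩ i j k hij hjk ⟨h1, h2⟩
    have hij' := Fin.lt_def.mp hij
    have hjk' := Fin.lt_def.mp hjk
    have hv1 : (embPerm n m hm σ τ k : ℕ) < embPerm n m hm σ τ i := Fin.lt_def.mp h1
    have hv2 : (embPerm n m hm σ τ i : ℕ) < embPerm n m hm σ τ j := Fin.lt_def.mp h2
    simp only [embPerm_apply] at hv1 hv2
    have hi := i.isLt; have hj := j.isLt; have hk := k.isLt
    rcases Nat.eq_zero_or_pos (i : ℕ) with hi0 | hi0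
    · rw [embFun_zero' n m hm σ τ i hi0] at hv1 hv2
      have hjm : m < (j : ℕ) := (embFun_gt_iff n m hm σ τ j).mp (by omega)
      have hkm : m < (k : ℕ) := by omega
      have : m < (embFun n m hm σ τ k : ℕ) := (embFun_gt_iff n m hm σ τ k).mpr hkm
      omega
    rcases le_or_gt (i : ℕ) m with hi1 | hi1
    · -- i in low block
      have hfi : (embFun n m hm σ τ i : ℕ) < m :=
        (embFun_lt_iff n m hm σ τ i).mpr ⟨hi0, hi1⟩
      have hk' : 0 < (k : ℕ) ∧ (k : ℕ) ≤ m :=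
        (embFun_lt_iff n m hm σ τ k).mp (by omega)
      -- so i < j < k ≤ m, all in low block
      have hj1 : (j : ℕ) ≤ m := by omega
      have hj0 : (j : ℕ) ≠ 0 := by omega
      have e1 := embFun_low' n m hm σ τ i (by omega) hi1
      have e2 := embFun_low' n m hm σ τ j hj0 hj1
      have e3 := embFun_low' n m hm σ τ k (by omega) hk'.2
      exact hσ ⟨(i : ℕ) - 1, by omega⟩ ⟨(j : ℕ) - 1, by omega⟩ ⟨(k : ℕ) - 1, by omega⟩
        (by rw [Fin.mk_lt_mk]; omega) (by rw [Fin.mk_lt_mk]; omega)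
        ⟨Fin.lt_def.mpr (by omega), Fin.lt_def.mpr (by omega)⟩
    · -- i in high block, hence j k too
      have e1 := embFun_high' n m hm σ τ i hi1
      have e2 := embFun_high' n m hm σ τ j (by omega)
      have e3 := embFun_high' n m hm σ τ k (by omega)
      exact hτ ⟨(i : ℕ) - (m + 1), by omega⟩ ⟨(j : ℕ) - (m + 1), by omega⟩
        ⟨(k : ℕ) - (m + 1), by omega⟩
        (by rw [Fin.mk_lt_mk]; omega) (by rw [Fin.mk_lt_mk]; omega)
        ⟨Fin.lt_def.mpr (by omega), Fin.lt_def.mpr (by omega)⟩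

set_option maxHeartbeats 1000000 in
lemma lrm_embPerm : lrmCount (embPerm n m hm σ τ) = lrmCount τ + 1 := by
  have key : (Finset.univ.filter (fun j : Fin (n + 1) =>
        ∀ i, i < j → embPerm n m hm σ τ i < embPerm n m hm σ τ j))
      = insert (0 : Fin (n + 1))
        ((Finset.univ.filter (fun j : Fin (n - m) => ∀ i, i < j → τ i < τ j)).image
          (fun x : Fin (n - m) => (⟨m + 1 + (x : ℕ), by have := x.isLt; omega⟩ : Fin (n + 1)))) := by
    ext j
    simp only [Finset.mem_filter, Finset.mem_univ, true_and, Finset.mem_insert,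
      Finset.mem_image]
    constructor
    · intro hj
      by_cases hj0 : (j : ℕ) = 0
      · left; exact Fin.ext (by simpa using hj0)
      · right
        have hjm : m < (j : ℕ) := by
          by_contra hle
          have h0j : (0 : Fin (n + 1)) < j := by
            rw [Fin.lt_def, Fin.val_zero]; omega
          have hlt := Fin.lt_def.mp (hj 0 h0j)
          simp only [embPerm_apply] at hlt
          have h00 := embFun_zero' n m hm σ τ 0 (by simp)
          have hjv := embFun_low' n m hm σ τ j hj0 (by omega)
          have := (σ ⟨(j : ℕ) - 1, by omega⟩).isLt
          omega
        refine ⟨⟨(j : ℕ) - (m + 1), by have := j.isLt; omega⟩, ?_, Fin.ext (by simp; omega)⟩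
        intro x hx
        have hxlt := Fin.lt_def.mp hx
        simp only at hxlt
        have hx' := x.isLt
        have hlt := Fin.lt_def.mp (hj ⟨m + 1 + (x : ℕ), by omega⟩ (by rw [Fin.lt_def]; simp; omega))
        simp only [embPerm_apply] at hlt
        have hxv := embFun_high n m hm σ τ x
        have hjv := embFun_high' n m hm σ τ j (by omega)
        rw [Fin.lt_def]
        omega
    · rintro (h0 | ⟨x, hx, rfl⟩)
      · subst h0
        intro i hi
        exact absurd (Fin.lt_def.mp hi) (by simp)
      · intro i hi
        have hi' := Fin.lt_def.mp hi
        simp only at hi'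
        have hx' := x.isLt
        rw [Fin.lt_def]
        simp only [embPerm_apply]
        have hxv := embFun_high n m hm σ τ x
        rcases Nat.eq_zero_or_pos (i : ℕ) with hi0 | hi0
        · have := embFun_zero' n m hm σ τ i hi0
          omega
        rcases le_or_gt (i : ℕ) m with hi1 | hi1
        · have := embFun_low' n m hm σ τ i (by omega) hi1
          have := (σ ⟨(i : ℕ) - 1, by omega⟩).isLt
          omega
        · have hiv := embFun_high' n m hm σ τ i hi1
          have hτlt := Fin.lt_def.mp (hx ⟨(i : ℕ) - (m + 1), by have := i.isLt; omega⟩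
            (by rw [Fin.lt_def]; simp; omega))
          omega
  rw [lrmCount, key, Finset.card_insert_of_notMem, Finset.card_image_of_injective,
    lrmCount]
  · intro a b hab
    have := congrArg Fin.val hab
    simp only at this
    exact Fin.ext (by omega)
  · simp only [Finset.mem_image]
    rintro ⟨x, -, h⟩
    have := congrArg Fin.val h
    simp at this

set_option maxHeartbeats 1000000 in
lemma lrmin_embPerm : lrminCount (embPerm n m hm σ τ) = lrminCount σ + 1 := by
  have key : (Finset.univ.filter (fun j : Fin (n + 1) =>
        ∀ i, i < j → embPerm n m hm σ τ j < embPerm n m hm σ τ i))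
      = insert (0 : Fin (n + 1))
        ((Finset.univ.filter (fun j : Fin m => ∀ i, i < j → σ j < σ i)).image
          (fun x : Fin m => (⟨(x : ℕ) + 1, by have := x.isLt; omega⟩ : Fin (n + 1)))) := by
    ext j
    simp only [Finset.mem_filter, Finset.mem_univ, true_and, Finset.mem_insert,
      Finset.mem_image]
    constructor
    · intro hj
      by_cases hj0 : (j : ℕ) = 0
      · left; exact Fin.ext (by simpa using hj0)
      · right
        have hjm : (j : ℕ) ≤ m := by
          by_contra hle
          have h0j : (0 : Fin (n + 1)) < j := by
            rw [Fin.lt_def, Fin.val_zero]; omega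
          have hlt := Fin.lt_def.mp (hj 0 h0j)
          simp only [embPerm_apply] at hlt
          have h00 := embFun_zero' n m hm σ τ 0 (by simp)
          have hjv := embFun_high' n m hm σ τ j (by omega)
          omega
        refine ⟨⟨(j : ℕ) - 1, by omega⟩, ?_, Fin.ext (by simp; omega)⟩
        intro x hx
        have hxlt := Fin.lt_def.mp hx
        simp only at hxlt
        have hx' := x.isLt
        have hlt := Fin.lt_def.mp (hj ⟨(x : ℕ) + 1, by omega⟩ (by rw [Fin.lt_def]; simp; omega))
        simp only [embPerm_apply] at hlt
        have hxv := embFun_low n m hm σ τ x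
        have hjv := embFun_low' n m hm σ τ j hj0 hjm
        rw [Fin.lt_def]
        omega
    · rintro (h0 | ⟨x, hx, rfl⟩)
      · subst h0
        intro i hi
        exact absurd (Fin.lt_def.mp hi) (by simp)
      · intro i hi
        have hi' := Fin.lt_def.mp hi
        simp only at hi'
        have hx' := x.isLt
        rw [Fin.lt_def]
        simp only [embPerm_apply]
        have hxv := embFun_low n m hm σ τ x
        have hσx := (σ x).isLt
        rcases Nat.eq_zero_or_pos (i : ℕ) with hi0 | hi0
        · have := embFun_zero' n m hm σ τ i hi0
          omega
        · have hiv := embFun_low' n m hm σ τ i (by omega) (by omega)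
          have hσlt := Fin.lt_def.mp (hx ⟨(i : ℕ) - 1, by omega⟩
            (by rw [Fin.lt_def]; simp; omega))
          omega
  rw [lrminCount, key, Finset.card_insert_of_notMem, Finset.card_image_of_injective,
    lrminCount]
  · intro a b hab
    have := congrArg Fin.val hab
    simp only at this
    exact Fin.ext (by omega)
  · simp only [Finset.mem_image]
    rintro ⟨x, -, h⟩
    have := congrArg Fin.val h
    simp at this

end Emb2

set_option maxHeartbeats 1000000 in
lemma structure231 (n : ℕ) (π : Equiv.Perm (Fin (n + 1))) (hπ : Avoids231 π)
    (i : Fin (n + 1)) (hi : 0 < (i : ℕ)) :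
    ((i : ℕ) ≤ (π 0 : ℕ) ↔ (π i : ℕ) < (π 0 : ℕ)) := by
  set m : ℕ := (π 0 : ℕ) with hmdef
  have hmlt : m < n + 1 := (π 0).isLt
  have hne : ∀ x : Fin (n + 1), 0 < (x : ℕ) → (π x : ℕ) ≠ m := by
    intro x hx h
    have : π x = π 0 := Fin.ext h
    have := congrArg Fin.val (π.injective this)
    rw [Fin.val_zero] at this
    omega
  have hsort : ∀ j k : Fin (n + 1), 0 < (j : ℕ) → (j : ℕ) < (k : ℕ) →
      m < (π j : ℕ) → m < (π k : ℕ) := by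
    intro j k hj0 hjk hjv
    have hk0 : 0 < (k : ℕ) := by omega
    by_contra hle
    have : (π k : ℕ) < m := by have := hne k hk0; omega
    exact hπ 0 j k (by rw [Fin.lt_def]; simpa using hj0) (Fin.lt_def.mpr hjk)
      ⟨Fin.lt_def.mpr (by omega), Fin.lt_def.mpr (by omega)⟩
  classical
  set S : Finset (Fin (n + 1)) :=
    Finset.univ.filter (fun x : Fin (n + 1) => (π x : ℕ) < m) with hSdef
  have hScard : S.card = m := by
    have himg : S = Finset.image π.symm
        (Finset.univ.filter (fun v : Fin (n + 1) => (v : ℕ) < m)) := by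
      ext x
      simp only [hSdef, Finset.mem_filter, Finset.mem_univ, true_and, Finset.mem_image,
        Equiv.symm_apply_eq]
      constructor
      · intro h; exact ⟨π x, h, rfl⟩
      · rintro ⟨v, hv, rfl⟩; exact hv
    rw [himg, Finset.card_image_of_injective _ π.symm.injective]
    have : Finset.univ.filter (fun v : Fin (n + 1) => (v : ℕ) < m)
        = Finset.Iio (⟨m, hmlt⟩ : Fin (n + 1)) := by
      ext v
      simp [Fin.lt_def]
    rw [this, Fin.card_Iio]
  have hS0 : ∀ x ∈ S, 0 < (x : ℕ) := by
    intro x hx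
    simp only [hSdef, Finset.mem_filter, Finset.mem_univ, true_and] at hx
    rcases Nat.eq_zero_or_pos (x : ℕ) with h | h
    · have : x = 0 := Fin.ext (by simpa using h)
      subst this; omega
    · exact h
  have hdc : ∀ x ∈ S, ∀ y : Fin (n + 1), 0 < (y : ℕ) → (y : ℕ) < (x : ℕ) → y ∈ S := by
    intro x hx y hy0 hyx
    simp only [hSdef, Finset.mem_filter, Finset.mem_univ, true_and] at hx ⊢
    by_contra h
    have hgt : m < (π y : ℕ) := by have := hne y hy0; omega
    have := hsort y x hy0 hyx hgt
    omega
  have hub : ∀ x ∈ S, (x : ℕ) ≤ m := by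
    intro x hx
    by_contra h
    have hsub : Finset.Ioc (0 : Fin (n + 1)) x ⊆ S := by
      intro y hy
      rw [Finset.mem_Ioc] at hy
      have hy0 : 0 < (y : ℕ) := by have := Fin.lt_def.mp hy.1; simpa using this
      have hyx : (y : ℕ) ≤ (x : ℕ) := Fin.le_def.mp hy.2
      rcases eq_or_lt_of_le hyx with he | hlt
      · have : y = x := Fin.ext he
        subst this; exact hx
      · exact hdc x hx y hy0 hlt
    have hcard := Finset.card_le_card hsub
    rw [Fin.card_Ioc] at hcard
    simp only [Fin.val_zero, Nat.sub_zero] at hcard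
    omega
  have hSeq : S = Finset.Ioc (0 : Fin (n + 1)) (⟨m, hmlt⟩ : Fin (n + 1)) := by
    apply Finset.eq_of_subset_of_card_le
    · intro x hx
      rw [Finset.mem_Ioc]
      constructor
      · rw [Fin.lt_def]; simpa using hS0 x hx
      · rw [Fin.le_def]; simpa using hub x hx
    · rw [Fin.card_Ioc, hScard]
      simp
  constructor
  · intro h
    have : i ∈ S := by
      rw [hSeq, Finset.mem_Ioc]
      exact ⟨by rw [Fin.lt_def]; simpa using hi, by rw [Fin.le_def]; simpa using h⟩
    simpa only [hSdef, Finset.mem_filter, Finset.mem_univ, true_and] using this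
  · intro h
    exact hub i (by simp only [hSdef, Finset.mem_filter, Finset.mem_univ, true_and]; exact h)

set_option maxHeartbeats 2000000 in
lemma cntMax_succ (n k : ℕ) :
    cntMax (n + 1) (k + 1) = ∑ m ∈ Finset.range (n + 1), cntAll m * cntMax (n - m) k := by
  classical
  have hbij : ((Finset.range (n + 1)).sigma (fun m =>
        (Finset.univ.filter (fun σ : Equiv.Perm (Fin m) => Avoids231 σ)) ×ˢ
        (Finset.univ.filter (fun τ : Equiv.Perm (Fin (n - m)) =>
          Avoids231 τ ∧ lrmCount τ = k)))).card
      = (Finset.univ.filter (fun π : Equiv.Perm (Fin (n + 1)) =>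
          Avoids231 π ∧ lrmCount π = k + 1)).card := by
    apply Finset.card_bij (fun a ha => embPerm n a.1
      (by have := (Finset.mem_sigma.mp ha).1; rw [Finset.mem_range] at this; omega)
      a.2.1 a.2.2)
    · -- maps into
      intro a ha
      obtain ⟨hm, hp⟩ := Finset.mem_sigma.mp ha
      rw [Finset.mem_range] at hm
      rw [Finset.mem_product] at hp
      simp only [Finset.mem_filter, Finset.mem_univ, true_and] at hp ⊢
      refine ⟨(avoids_embPerm _ _ _ _ _).mpr ⟨hp.1, hp.2.1⟩, ?_⟩
      rw [lrm_embPerm, hp.2.2]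
    · -- injective
      rintro ⟨m₁, σ₁, τ₁⟩ ha₁ ⟨m₂, σ₂, τ₂⟩ ha₂ heq
      simp only at heq
      have hm₁ : m₁ ≤ n := by
        have h := (Finset.mem_sigma.mp ha₁).1
        rw [Finset.mem_range] at h
        exact Nat.lt_succ_iff.mp h
      have hm₂ : m₂ ≤ n := by
        have h := (Finset.mem_sigma.mp ha₂).1
        rw [Finset.mem_range] at h
        exact Nat.lt_succ_iff.mp h
      have h0 : m₁ = m₂ := by
        have h := congrArg (fun e : Equiv.Perm (Fin (n + 1)) => ((e 0 : Fin (n + 1)) : ℕ)) heq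
        simp only [embPerm_apply] at h
        rwa [embFun_zero' n m₁ _ σ₁ τ₁ 0 (by simp),
          embFun_zero' n m₂ _ σ₂ τ₂ 0 (by simp)] at h
      subst h0
      have hσ : σ₁ = σ₂ := by
        apply Equiv.ext
        intro x
        have hx := x.isLt
        have h := congrArg (fun e : Equiv.Perm (Fin (n + 1)) =>
          ((e ⟨(x : ℕ) + 1, by omega⟩ : Fin (n + 1)) : ℕ)) heq
        simp only [embPerm_apply] at h
        rw [embFun_low n m₁ _ σ₁ τ₁ x, embFun_low n m₁ _ σ₂ τ₂ x] at h
        exact Fin.ext h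
      have hτ : τ₁ = τ₂ := by
        apply Equiv.ext
        intro x
        have hx := x.isLt
        have h := congrArg (fun e : Equiv.Perm (Fin (n + 1)) =>
          ((e ⟨m₁ + 1 + (x : ℕ), by omega⟩ : Fin (n + 1)) : ℕ)) heq
        simp only [embPerm_apply] at h
        rw [embFun_high n m₁ _ σ₁ τ₁ x, embFun_high n m₁ _ σ₂ τ₂ x] at h
        exact Fin.ext (by omega)
      rw [hσ, hτ]
    · -- surjective
      intro b hb
      simp only [Finset.mem_filter, Finset.mem_univ, true_and] at hb
      obtain ⟨hav, hlrm⟩ := hb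
      set m : ℕ := ((b 0 : Fin (n + 1)) : ℕ) with hmdef
      have hm : m ≤ n := by have := (b 0).isLt; omega
      have hstr := structure231 n b hav
      -- low block map
      have hσmem : ∀ x : Fin m, ((b ⟨(x : ℕ) + 1, by have := x.isLt; omega⟩ : Fin (n + 1)) : ℕ) < m := by
        intro x
        have hx := x.isLt
        exact (hstr ⟨(x : ℕ) + 1, by omega⟩ (by simp)).mp (by simp; omega)
      let σf : Fin m → Fin m := fun x => ⟨_, hσmem x⟩
      have hσinj : Function.Injective σf := by
        intro x y h
        have hval : ((b ⟨(x : ℕ) + 1, by have := x.isLt; omega⟩ : Fin (n + 1)) : ℕ)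
            = ((b ⟨(y : ℕ) + 1, by have := y.isLt; omega⟩ : Fin (n + 1)) : ℕ) := by
          have h0 := congrArg Fin.val h
          exact h0
        have := congrArg Fin.val (b.injective (Fin.ext hval))
        simp only at this
        exact Fin.ext (by omega)
      let σ : Equiv.Perm (Fin m) := Equiv.ofBijective σf (Finite.injective_iff_bijective.mp hσinj)
      -- high block map
      have hτmem : ∀ x : Fin (n - m),
          m < ((b ⟨m + 1 + (x : ℕ), by have := x.isLt; omega⟩ : Fin (n + 1)) : ℕ) := by
        intro x
        have hx := x.isLt
        have h1 : ¬ ((b ⟨m + 1 + (x : ℕ), by omega⟩ : Fin (n + 1)) : ℕ) < m := by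
          intro h
          have := (hstr ⟨m + 1 + (x : ℕ), by omega⟩ (by simp)).mpr h
          simp at this; omega
        have h2 : ((b ⟨m + 1 + (x : ℕ), by omega⟩ : Fin (n + 1)) : ℕ) ≠ m := by
          intro h
          have : b ⟨m + 1 + (x : ℕ), by omega⟩ = b 0 := Fin.ext (by simpa using h)
          have := congrArg Fin.val (b.injective this)
          simp at this
        omega
      have hτbd : ∀ x : Fin (n - m),
          ((b ⟨m + 1 + (x : ℕ), by have := x.isLt; omega⟩ : Fin (n + 1)) : ℕ) - (m + 1) < n - m := by
        intro x
        have := (b ⟨m + 1 + (x : ℕ), by have := x.isLt; omega⟩).isLt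
        have := hτmem x
        omega
      let τf : Fin (n - m) → Fin (n - m) := fun x => ⟨_, hτbd x⟩
      have hτinj : Function.Injective τf := by
        intro x y h
        have hvx := hτmem x
        have hvy := hτmem y
        have hval : ((b ⟨m + 1 + (x : ℕ), by have := x.isLt; omega⟩ : Fin (n + 1)) : ℕ) - (m + 1)
            = ((b ⟨m + 1 + (y : ℕ), by have := y.isLt; omega⟩ : Fin (n + 1)) : ℕ) - (m + 1) := by
          have h0 := congrArg Fin.val h
          exact h0
        have h' : ((b ⟨m + 1 + (x : ℕ), by have := x.isLt; omega⟩ : Fin (n + 1)) : ℕ)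
            = ((b ⟨m + 1 + (y : ℕ), by have := y.isLt; omega⟩ : Fin (n + 1)) : ℕ) := by omega
        have := congrArg Fin.val (b.injective (Fin.ext h'))
        simp only at this
        exact Fin.ext (by omega)
      let τ : Equiv.Perm (Fin (n - m)) :=
        Equiv.ofBijective τf (Finite.injective_iff_bijective.mp hτinj)
      have hkey : embPerm n m hm σ τ = b := by
        apply Equiv.ext
        intro i
        apply Fin.ext
        rw [embPerm_apply]
        have hi := i.isLt
        rcases Nat.eq_zero_or_pos (i : ℕ) with hi0 | hi0
        · rw [embFun_zero' n m hm σ τ i hi0]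
          have : i = 0 := Fin.ext (by simpa using hi0)
          rw [this]
        rcases le_or_gt (i : ℕ) m with hi1 | hi1
        · rw [embFun_low' n m hm σ τ i (by omega) hi1]
          have harg : (⟨((i : ℕ) - 1) + 1, by omega⟩ : Fin (n + 1)) = i :=
            Fin.ext (by simp; omega)
          show ((b (⟨((i : ℕ) - 1) + 1, by omega⟩ : Fin (n + 1)) : Fin (n + 1)) : ℕ)
            = ((b i : Fin (n + 1)) : ℕ)
          rw [harg]
        · rw [embFun_high' n m hm σ τ i hi1]
          show m + 1 + (((b ⟨m + 1 + ((i : ℕ) - (m + 1)), _⟩ : Fin (n + 1)) : ℕ) - (m + 1)) = _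
          have harg : (⟨m + 1 + ((i : ℕ) - (m + 1)), by omega⟩ : Fin (n + 1)) = i :=
            Fin.ext (by simp; omega)
          rw [harg]
          have hgt : m < ((b i : Fin (n + 1)) : ℕ) := by
            have := hτmem ⟨(i : ℕ) - (m + 1), by omega⟩
            simp only at this
            rwa [show (⟨m + 1 + ((i : ℕ) - (m + 1)), by omega⟩ : Fin (n + 1)) = i from harg] at this
          omega
      refine ⟨⟨m, σ, τ⟩, ?_, ?_⟩
      · rw [Finset.mem_sigma, Finset.mem_range, Finset.mem_product]
        have hav' : Avoids231 (embPerm n m hm σ τ) := by rw [hkey]; exact hav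
        have h2 := (avoids_embPerm n m hm σ τ).mp hav'
        refine ⟨by show m < n + 1; omega, ?_, ?_⟩
        · simp only [Finset.mem_filter, Finset.mem_univ, true_and]
          exact h2.1
        · simp only [Finset.mem_filter, Finset.mem_univ, true_and]
          refine ⟨h2.2, ?_⟩
          have := lrm_embPerm n m hm σ τ
          rw [hkey, hlrm] at this
          omega
      · exact hkey
  rw [cntMax, ← hbij, Finset.card_sigma]
  apply Finset.sum_congr rfl
  intro m hm
  rw [Finset.card_product]
  rfl

set_option maxHeartbeats 2000000 in
lemma cntMin_succ (n k : ℕ) :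
    cntMin (n + 1) (k + 1) = ∑ m ∈ Finset.range (n + 1), cntMin m k * cntAll (n - m) := by
  classical
  have hbij : ((Finset.range (n + 1)).sigma (fun m =>
        (Finset.univ.filter (fun σ : Equiv.Perm (Fin m) => Avoids231 σ ∧ lrminCount σ = k)) ×ˢ
        (Finset.univ.filter (fun τ : Equiv.Perm (Fin (n - m)) => Avoids231 τ)))).card
      = (Finset.univ.filter (fun π : Equiv.Perm (Fin (n + 1)) =>
          Avoids231 π ∧ lrminCount π = k + 1)).card := by
    apply Finset.card_bij (fun a ha => embPerm n a.1
      (by have := (Finset.mem_sigma.mp ha).1; rw [Finset.mem_range] at this; omega)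
      a.2.1 a.2.2)
    · -- maps into
      intro a ha
      obtain ⟨hm, hp⟩ := Finset.mem_sigma.mp ha
      rw [Finset.mem_range] at hm
      rw [Finset.mem_product] at hp
      simp only [Finset.mem_filter, Finset.mem_univ, true_and] at hp ⊢
      refine ⟨(avoids_embPerm _ _ _ _ _).mpr ⟨hp.1.1, hp.2⟩, ?_⟩
      rw [lrmin_embPerm, hp.1.2]
    · -- injective
      rintro ⟨m₁, σ₁, τ₁⟩ ha₁ ⟨m₂, σ₂, τ₂⟩ ha₂ heq
      simp only at heq
      have hm₁ : m₁ ≤ n := by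
        have h := (Finset.mem_sigma.mp ha₁).1
        rw [Finset.mem_range] at h
        exact Nat.lt_succ_iff.mp h
      have hm₂ : m₂ ≤ n := by
        have h := (Finset.mem_sigma.mp ha₂).1
        rw [Finset.mem_range] at h
        exact Nat.lt_succ_iff.mp h
      have h0 : m₁ = m₂ := by
        have h := congrArg (fun e : Equiv.Perm (Fin (n + 1)) => ((e 0 : Fin (n + 1)) : ℕ)) heq
        simp only [embPerm_apply] at h
        rwa [embFun_zero' n m₁ _ σ₁ τ₁ 0 (by simp),
          embFun_zero' n m₂ _ σ₂ τ₂ 0 (by simp)] at h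
      subst h0
      have hσ : σ₁ = σ₂ := by
        apply Equiv.ext
        intro x
        have hx := x.isLt
        have h := congrArg (fun e : Equiv.Perm (Fin (n + 1)) =>
          ((e ⟨(x : ℕ) + 1, by omega⟩ : Fin (n + 1)) : ℕ)) heq
        simp only [embPerm_apply] at h
        rw [embFun_low n m₁ _ σ₁ τ₁ x, embFun_low n m₁ _ σ₂ τ₂ x] at h
        exact Fin.ext h
      have hτ : τ₁ = τ₂ := by
        apply Equiv.ext
        intro x
        have hx := x.isLt
        have h := congrArg (fun e : Equiv.Perm (Fin (n + 1)) =>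
          ((e ⟨m₁ + 1 + (x : ℕ), by omega⟩ : Fin (n + 1)) : ℕ)) heq
        simp only [embPerm_apply] at h
        rw [embFun_high n m₁ _ σ₁ τ₁ x, embFun_high n m₁ _ σ₂ τ₂ x] at h
        exact Fin.ext (by omega)
      rw [hσ, hτ]
    · -- surjective
      intro b hb
      simp only [Finset.mem_filter, Finset.mem_univ, true_and] at hb
      obtain ⟨hav, hlrm⟩ := hb
      set m : ℕ := ((b 0 : Fin (n + 1)) : ℕ) with hmdef
      have hm : m ≤ n := by have := (b 0).isLt; omega
      have hstr := structure231 n b hav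
      -- low block map
      have hσmem : ∀ x : Fin m, ((b ⟨(x : ℕ) + 1, by have := x.isLt; omega⟩ : Fin (n + 1)) : ℕ) < m := by
        intro x
        have hx := x.isLt
        exact (hstr ⟨(x : ℕ) + 1, by omega⟩ (by simp)).mp (by simp; omega)
      let σf : Fin m → Fin m := fun x => ⟨_, hσmem x⟩
      have hσinj : Function.Injective σf := by
        intro x y h
        have hval : ((b ⟨(x : ℕ) + 1, by have := x.isLt; omega⟩ : Fin (n + 1)) : ℕ)
            = ((b ⟨(y : ℕ) + 1, by have := y.isLt; omega⟩ : Fin (n + 1)) : ℕ) := by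
          have h0 := congrArg Fin.val h
          exact h0
        have := congrArg Fin.val (b.injective (Fin.ext hval))
        simp only at this
        exact Fin.ext (by omega)
      let σ : Equiv.Perm (Fin m) := Equiv.ofBijective σf (Finite.injective_iff_bijective.mp hσinj)
      -- high block map
      have hτmem : ∀ x : Fin (n - m),
          m < ((b ⟨m + 1 + (x : ℕ), by have := x.isLt; omega⟩ : Fin (n + 1)) : ℕ) := by
        intro x
        have hx := x.isLt
        have h1 : ¬ ((b ⟨m + 1 + (x : ℕ), by omega⟩ : Fin (n + 1)) : ℕ) < m := by
          intro h
          have := (hstr ⟨m + 1 + (x : ℕ), by omega⟩ (by simp)).mpr h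
          simp at this; omega
        have h2 : ((b ⟨m + 1 + (x : ℕ), by omega⟩ : Fin (n + 1)) : ℕ) ≠ m := by
          intro h
          have : b ⟨m + 1 + (x : ℕ), by omega⟩ = b 0 := Fin.ext (by simpa using h)
          have := congrArg Fin.val (b.injective this)
          simp at this
        omega
      have hτbd : ∀ x : Fin (n - m),
          ((b ⟨m + 1 + (x : ℕ), by have := x.isLt; omega⟩ : Fin (n + 1)) : ℕ) - (m + 1) < n - m := by
        intro x
        have := (b ⟨m + 1 + (x : ℕ), by have := x.isLt; omega⟩).isLt
        have := hτmem x
        omega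
      let τf : Fin (n - m) → Fin (n - m) := fun x => ⟨_, hτbd x⟩
      have hτinj : Function.Injective τf := by
        intro x y h
        have hvx := hτmem x
        have hvy := hτmem y
        have hval : ((b ⟨m + 1 + (x : ℕ), by have := x.isLt; omega⟩ : Fin (n + 1)) : ℕ) - (m + 1)
            = ((b ⟨m + 1 + (y : ℕ), by have := y.isLt; omega⟩ : Fin (n + 1)) : ℕ) - (m + 1) := by
          have h0 := congrArg Fin.val h
          exact h0
        have h' : ((b ⟨m + 1 + (x : ℕ), by have := x.isLt; omega⟩ : Fin (n + 1)) : ℕ)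
            = ((b ⟨m + 1 + (y : ℕ), by have := y.isLt; omega⟩ : Fin (n + 1)) : ℕ) := by omega
        have := congrArg Fin.val (b.injective (Fin.ext h'))
        simp only at this
        exact Fin.ext (by omega)
      let τ : Equiv.Perm (Fin (n - m)) :=
        Equiv.ofBijective τf (Finite.injective_iff_bijective.mp hτinj)
      have hkey : embPerm n m hm σ τ = b := by
        apply Equiv.ext
        intro i
        apply Fin.ext
        rw [embPerm_apply]
        have hi := i.isLt
        rcases Nat.eq_zero_or_pos (i : ℕ) with hi0 | hi0
        · rw [embFun_zero' n m hm σ τ i hi0]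
          have : i = 0 := Fin.ext (by simpa using hi0)
          rw [this]
        rcases le_or_gt (i : ℕ) m with hi1 | hi1
        · rw [embFun_low' n m hm σ τ i (by omega) hi1]
          have harg : (⟨((i : ℕ) - 1) + 1, by omega⟩ : Fin (n + 1)) = i :=
            Fin.ext (by simp; omega)
          show ((b (⟨((i : ℕ) - 1) + 1, by omega⟩ : Fin (n + 1)) : Fin (n + 1)) : ℕ)
            = ((b i : Fin (n + 1)) : ℕ)
          rw [harg]
        · rw [embFun_high' n m hm σ τ i hi1]
          show m + 1 + (((b ⟨m + 1 + ((i : ℕ) - (m + 1)), _⟩ : Fin (n + 1)) : ℕ) - (m + 1)) = _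
          have harg : (⟨m + 1 + ((i : ℕ) - (m + 1)), by omega⟩ : Fin (n + 1)) = i :=
            Fin.ext (by simp; omega)
          rw [harg]
          have hgt : m < ((b i : Fin (n + 1)) : ℕ) := by
            have := hτmem ⟨(i : ℕ) - (m + 1), by omega⟩
            simp only at this
            rwa [show (⟨m + 1 + ((i : ℕ) - (m + 1)), by omega⟩ : Fin (n + 1)) = i from harg] at this
          omega
      refine ⟨⟨m, σ, τ⟩, ?_, ?_⟩
      · rw [Finset.mem_sigma, Finset.mem_range, Finset.mem_product]
        have hav' : Avoids231 (embPerm n m hm σ τ) := by rw [hkey]; exact hav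
        have h2 := (avoids_embPerm n m hm σ τ).mp hav'
        refine ⟨by show m < n + 1; omega, ?_, ?_⟩
        · simp only [Finset.mem_filter, Finset.mem_univ, true_and]
          refine ⟨h2.1, ?_⟩
          have := lrmin_embPerm n m hm σ τ
          rw [hkey, hlrm] at this
          omega
        · simp only [Finset.mem_filter, Finset.mem_univ, true_and]
          exact h2.2
      · exact hkey
  rw [cntMin, ← hbij, Finset.card_sigma]
  apply Finset.sum_congr rfl
  intro m hm
  rw [Finset.card_product]
  rfl


lemma cntMax_succ_zero (n : ℕ) : cntMax (n + 1) 0 = 0 := by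
  rw [cntMax, Finset.card_eq_zero, Finset.filter_eq_empty_iff]
  intro π _
  rintro ⟨-, h0⟩
  have hmem : (0 : Fin (n + 1)) ∈ Finset.univ.filter
      (fun j : Fin (n + 1) => ∀ i, i < j → π i < π j) := by
    simp only [Finset.mem_filter, Finset.mem_univ, true_and]
    intro i hi
    exact absurd (Fin.lt_def.mp hi) (by simp)
  have := Finset.card_ne_zero_of_mem hmem
  rw [lrmCount] at h0
  exact this h0

lemma cntMin_succ_zero (n : ℕ) : cntMin (n + 1) 0 = 0 := by
  rw [cntMin, Finset.card_eq_zero, Finset.filter_eq_empty_iff]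
  intro π _
  rintro ⟨-, h0⟩
  have hmem : (0 : Fin (n + 1)) ∈ Finset.univ.filter
      (fun j : Fin (n + 1) => ∀ i, i < j → π j < π i) := by
    simp only [Finset.mem_filter, Finset.mem_univ, true_and]
    intro i hi
    exact absurd (Fin.lt_def.mp hi) (by simp)
  have := Finset.card_ne_zero_of_mem hmem
  rw [lrminCount] at h0
  exact this h0

lemma cnt_zero_eq (k : ℕ) : cntMax 0 k = cntMin 0 k := by
  rw [cntMax, cntMin]
  congr 1

lemma max_eq_min (n : ℕ) : ∀ k, cntMax n k = cntMin n k := by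
  induction n using Nat.strong_induction_on with
  | _ n ih =>
    intro k
    rcases n with _ | n
    · exact cnt_zero_eq k
    rcases k with _ | k
    · rw [cntMax_succ_zero, cntMin_succ_zero]
    rw [cntMax_succ, cntMin_succ]
    rw [← Finset.sum_range_reflect (fun m => cntMin m k * cntAll (n - m)) (n + 1)]
    apply Finset.sum_congr rfl
    intro m hm
    rw [Finset.mem_range] at hm
    have e1 : n + 1 - 1 - m = n - m := by omega
    have e2 : n - (n - m) = m := by omega
    rw [e1, e2, ← ih (n - m) (by omega) k]
    ring

-- complement bijection
lemma avoids213_trans_rev {N : ℕ} (π : Equiv.Perm (Fin N)) (h : Avoids231 π) :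
    Avoids213 (π.trans Fin.revPerm) := by
  intro i j k hij hjk hpat
  refine h i j k hij hjk ⟨?_, ?_⟩
  · exact (Fin.rev_lt_rev).mp (by simpa using hpat.2)
  · exact (Fin.rev_lt_rev).mp (by simpa using hpat.1)

lemma avoids231_trans_rev {N : ℕ} (π : Equiv.Perm (Fin N)) (h : Avoids213 π) :
    Avoids231 (π.trans Fin.revPerm) := by
  intro i j k hij hjk hpat
  refine h i j k hij hjk ⟨?_, ?_⟩
  · exact (Fin.rev_lt_rev).mp (by simpa using hpat.2)
  · exact (Fin.rev_lt_rev).mp (by simpa using hpat.1)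

lemma lrm_trans_rev {N : ℕ} (π : Equiv.Perm (Fin N)) :
    lrmCount (π.trans Fin.revPerm) = lrminCount π := by
  rw [lrmCount, lrminCount]
  congr 1
  apply Finset.filter_congr
  intro j _
  constructor
  · intro h i hi
    exact (Fin.rev_lt_rev).mp (by simpa using h i hi)
  · intro h i hi
    simpa using (Fin.rev_lt_rev).mpr (h i hi)

lemma lrmin_trans_rev {N : ℕ} (π : Equiv.Perm (Fin N)) :
    lrminCount (π.trans Fin.revPerm) = lrmCount π := by
  rw [lrmCount, lrminCount]
  congr 1
  apply Finset.filter_congr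
  intro j _
  constructor
  · intro h i hi
    exact (Fin.rev_lt_rev).mp (by simpa using h i hi)
  · intro h i hi
    simpa using (Fin.rev_lt_rev).mpr (h i hi)

lemma min_eq_213 (N k : ℕ) :
    cntMin N k = (Finset.univ.filter (fun π : Equiv.Perm (Fin N) =>
      Avoids213 π ∧ lrmCount π = k)).card := by
  rw [cntMin]
  apply Finset.card_bij (fun π _ => π.trans Fin.revPerm)
  · intro π hπ
    simp only [Finset.mem_filter, Finset.mem_univ, true_and] at hπ ⊢
    exact ⟨avoids213_trans_rev π hπ.1, by rw [lrm_trans_rev, hπ.2]⟩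
  · intro π₁ h₁ π₂ h₂ heq
    apply Equiv.ext
    intro x
    have := congrFun (congrArg (fun e : Equiv.Perm (Fin N) => (e : Fin N → Fin N)) heq) x
    simp only [Equiv.trans_apply, Fin.revPerm_apply] at this
    exact Fin.rev_injective this
  · intro b hb
    simp only [Finset.mem_filter, Finset.mem_univ, true_and] at hb
    refine ⟨b.trans Fin.revPerm, ?_, ?_⟩
    · simp only [Finset.mem_filter, Finset.mem_univ, true_and]
      exact ⟨avoids231_trans_rev b hb.1, by rw [lrmin_trans_rev, hb.2]⟩
    · apply Equiv.ext
      intro x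
      simp [Fin.rev_rev]

end Stmt11Aux

theorem stmt11 (N k : ℕ) (hk : 1 ≤ k) (hkN : k ≤ N) :
    (Finset.univ.filter (fun π : Equiv.Perm (Fin N) =>
        Avoids231 π ∧ lrmCount π = k)).card
      = (Finset.univ.filter (fun π : Equiv.Perm (Fin N) =>
        Avoids213 π ∧ lrmCount π = k)).card := by
  have h1 : (Finset.univ.filter (fun π : Equiv.Perm (Fin N) =>
      Avoids231 π ∧ lrmCount π = k)).card = Stmt11Aux.cntMax N k := rfl
  rw [h1, Stmt11Aux.max_eq_min, Stmt11Aux.min_eq_213]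
end

section
/- The number of permutations of {1,...,N} such that the entry immediately to the right of the value N is larger than every entry to the left of the value N (with no condition when N is the last entry) equals (N-1)! * (1 + H_{N-1}), where H_{N-1} is the (N-1)st harmonic number. -/
open Finset Equiv

/-- `(2-N1)`-avoidance: the entry immediately to the right of the maximal value `N`
is larger than every entry to the left of the value `N`. -/
def AvoidsTwoDashN1 {N : ℕ} (hN : 1 ≤ N) (π : Equiv.Perm (Fin N)) : Prop :=
  ∀ j k : Fin N, π j = ⟨N - 1, by omega⟩ → (k : ℕ) = (j : ℕ) + 1 →
    ∀ i, i < j → π i < π k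

instance {N : ℕ} (hN : 1 ≤ N) : DecidablePred (AvoidsTwoDashN1 hN) := fun π => by
  unfold AvoidsTwoDashN1; infer_instance

/-- The number of permutations sending a fixed point `j` to a fixed value `v` is `n!`. -/
lemma fiber_card_perm {n : ℕ} (j v : Fin (n+1)) :
    (univ.filter fun π : Perm (Fin (n+1)) => π j = v).card = n.factorial := by
  have hall : ∀ v w : Fin (n+1),
      (univ.filter fun π : Perm (Fin (n+1)) => π j = v).card
      = (univ.filter fun π : Perm (Fin (n+1)) => π j = w).card := by
    intro v w
    apply Finset.card_bij (fun π _ => Equiv.swap v w * π)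
    · intro π hπ
      simp only [mem_filter, mem_univ, true_and] at *
      simp [hπ]
    · intro π _ σ _ h
      exact mul_left_cancel h
    · intro σ hσ
      refine ⟨Equiv.swap v w * σ, ?_, ?_⟩
      · simp only [mem_filter, mem_univ, true_and] at *
        simp [hσ]
      · simp [← mul_assoc]
  have hsum : (univ : Finset (Perm (Fin (n+1)))).card
      = ∑ w : Fin (n+1), (univ.filter fun π : Perm (Fin (n+1)) => π j = w).card :=
    Finset.card_eq_sum_card_fiberwise (fun π _ => mem_univ _)
  have hconst : ∑ w : Fin (n+1), (univ.filter fun π : Perm (Fin (n+1)) => π j = w).card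
      = (n+1) * (univ.filter fun π : Perm (Fin (n+1)) => π j = v).card := by
    rw [Finset.sum_congr rfl (fun w _ => (hall v w).symm)]
    simp [Finset.sum_const, mul_comm]
  have hcard : (univ : Finset (Perm (Fin (n+1)))).card = (n+1).factorial := by
    rw [Finset.card_univ, Fintype.card_perm, Fintype.card_fin]
  have : (n+1) * (univ.filter fun π : Perm (Fin (n+1)) => π j = v).card
      = (n+1) * n.factorial := by
    rw [← hconst, ← hsum, hcard, Nat.factorial_succ]
  exact Nat.eq_of_mul_eq_mul_left (Nat.succ_pos n) this

/-- Key counting lemma. -/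
lemma key_count {n : ℕ} (j : Fin (n+1)) (hj : (j:ℕ) < n) :
    (univ.filter fun π : Perm (Fin (n+1)) =>
        π j = Fin.last n ∧ ∀ i, i < j → π i < π ⟨(j:ℕ)+1, by omega⟩).card * ((j:ℕ)+1)
      = n.factorial := by
  set k : Fin (n+1) := ⟨(j:ℕ)+1, by omega⟩ with hk
  set P : Finset (Fin (n+1)) := insert k (univ.filter (· < j)) with hP
  have hkP : k ∈ P := mem_insert_self _ _
  have hjP : j ∉ P := by
    simp only [hP, mem_insert, mem_filter, mem_univ, true_and]
    push_neg
    constructor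
    · intro h; exact absurd (congrArg Fin.val h) (by simp [hk])
    · exact le_refl j
  have hmemP : ∀ q : Fin (n+1), q ∈ P ↔ (q = k ∨ q < j) := by
    intro q; simp [hP]
  have hPcard : P.card = (j:ℕ) + 1 := by
    have h1 : (univ.filter (· < j)) = Finset.Iio j := by ext q; simp
    have h2 : k ∉ univ.filter (· < j) := by
      simp only [mem_filter, mem_univ, true_and]
      simp [hk, Fin.lt_def]
    rw [hP, Finset.card_insert_of_notMem h2, h1, Fin.card_Iio]
  classical
  have hPne : ∀ π : Perm (Fin (n+1)), ((P.image π).Nonempty) :=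
    fun π => ⟨π k, mem_image_of_mem π hkP⟩
  set f : Perm (Fin (n+1)) → Fin (n+1) := fun π => π.symm ((P.image π).max' (hPne π)) with hf
  have hfP : ∀ π, f π ∈ P := by
    intro π
    obtain ⟨q, hq, hq2⟩ := mem_image.mp ((P.image π).max'_mem (hPne π))
    have : f π = q := by rw [hf]; simp only; rw [← hq2, π.symm_apply_apply]
    rwa [this]
  have fchar : ∀ (π : Perm (Fin (n+1))) (p : Fin (n+1)), p ∈ P →
      (f π = p ↔ ∀ q ∈ P, q ≠ p → π q < π p) := by
    intro π p hp
    constructor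
    · intro h q hq hqp
      have hmax : π q ≤ (P.image π).max' (hPne π) := Finset.le_max' _ _ (mem_image_of_mem π hq)
      have hpp : (P.image π).max' (hPne π) = π p := by
        rw [← h, hf]; simp only [Equiv.apply_symm_apply]
      rw [hpp] at hmax
      exact lt_of_le_of_ne hmax (fun he => hqp (π.injective he))
    · intro h
      obtain ⟨q₀, hq₀, hq₀2⟩ := mem_image.mp ((P.image π).max'_mem (hPne π))
      by_cases hqp : q₀ = p
      · rw [hf]; simp only; rw [← hq₀2, hqp, π.symm_apply_apply]
      · exfalso
        have h1 : π q₀ < π p := h q₀ hq₀ hqp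
        have h2 : π p ≤ π q₀ := by
          rw [hq₀2]; exact Finset.le_max' _ _ (mem_image_of_mem π hp)
        exact absurd h2 (not_le.mpr h1)
  have swaplem : ∀ (σ : Perm (Fin (n+1))) (a b : Fin (n+1)), a ∈ P → b ∈ P →
      f σ = a → f (σ * Equiv.swap a b) = b := by
    intro σ a b ha hb hfa
    rw [fchar _ b hb]
    intro q hq hqb
    have hmax := (fchar σ a ha).mp hfa
    have hb' : (σ * Equiv.swap a b) b = σ a := by
      simp [Equiv.Perm.mul_apply, Equiv.swap_apply_right]
    rw [hb']
    have hq' : (σ * Equiv.swap a b) q = σ (Equiv.swap a b q) := rfl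
    rw [hq']
    rcases eq_or_ne q a with rfl | hqa
    · rw [Equiv.swap_apply_left]
      exact hmax b hb (fun h => hqb h.symm)
    · rw [Equiv.swap_apply_of_ne_of_ne hqa hqb]
      exact hmax q hq hqa
  set s := univ.filter fun π : Perm (Fin (n+1)) => π j = Fin.last n with hs
  have hsum : s.card = ∑ p ∈ P, (s.filter fun π => f π = p).card :=
    Finset.card_eq_sum_card_fiberwise (fun π hπ => hfP π)
  have hswapj : ∀ (π : Perm (Fin (n+1))) (p : Fin (n+1)), p ∈ P →
      (π * Equiv.swap p k) j = π j := by
    intro π p hp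
    have h1 : j ≠ p := fun h => hjP (h ▸ hp)
    have h2 : j ≠ k := fun h => hjP (h ▸ hkP)
    show π (Equiv.swap p k j) = π j
    rw [Equiv.swap_apply_of_ne_of_ne (Ne.symm (fun h => h1 h.symm)) (Ne.symm (fun h => h2 h.symm))]
  have heq : ∀ p ∈ P, (s.filter fun π => f π = p).card = (s.filter fun π => f π = k).card := by
    intro p hp
    apply Finset.card_bij (fun π _ => π * Equiv.swap p k)
    · intro π hπ
      simp only [hs, mem_filter, mem_univ, true_and] at hπ ⊢
      exact ⟨(hswapj π p hp).trans hπ.1, swaplem π p k hp hkP hπ.2⟩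
    · intro π _ σ _ h
      exact mul_right_cancel h
    · intro σ hσ
      simp only [hs, mem_filter, mem_univ, true_and] at hσ
      refine ⟨σ * Equiv.swap p k, ?_, ?_⟩
      · simp only [hs, mem_filter, mem_univ, true_and]
        have hsk : Equiv.swap p k = Equiv.swap k p := Equiv.swap_comm p k
        refine ⟨(hswapj σ p hp).trans hσ.1, ?_⟩
        rw [hsk]
        exact swaplem σ k p hkP hp hσ.2
      · rw [mul_assoc, Equiv.swap_mul_self, mul_one]
  have hscard : s.card = n.factorial := fiber_card_perm j (Fin.last n)
  have hsum2 : n.factorial = ((j:ℕ)+1) * (s.filter fun π => f π = k).card := by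
    rw [← hscard, hsum, Finset.sum_congr rfl heq, Finset.sum_const, hPcard, smul_eq_mul]
  have htarget : (univ.filter fun π : Perm (Fin (n+1)) =>
      π j = Fin.last n ∧ ∀ i, i < j → π i < π ⟨(j:ℕ)+1, by omega⟩)
      = s.filter fun π => f π = k := by
    rw [hs, Finset.filter_filter]
    apply Finset.filter_congr
    intro π _
    constructor
    · rintro ⟨h1, h2⟩
      refine ⟨h1, (fchar π k hkP).mpr ?_⟩
      intro q hq hqk
      rcases (hmemP q).mp hq with rfl | hlt
      · exact absurd rfl hqk
      · exact h2 q hlt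
    · rintro ⟨h1, h2⟩
      refine ⟨h1, ?_⟩
      intro i hi
      exact (fchar π k hkP).mp h2 i ((hmemP i).mpr (Or.inr hi))
        (by intro h; rw [h] at hi; exact absurd hi (by simp [hk, Fin.lt_def]))
  rw [htarget, mul_comm]
  exact hsum2.symm

theorem stmt19 (N : ℕ) (hN : 1 ≤ N) :
    ((Finset.univ.filter (fun π : Equiv.Perm (Fin N) => AvoidsTwoDashN1 hN π)).card : ℚ)
      = ((N - 1).factorial : ℚ) * (1 + ∑ i ∈ Finset.Icc 1 (N - 1), (1 : ℚ) / i) := by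
  classical
  obtain ⟨n, rfl⟩ : ∃ n, N = n + 1 := ⟨N - 1, by omega⟩
  have htop : (⟨n + 1 - 1, by omega⟩ : Fin (n+1)) = Fin.last n := by
    apply Fin.ext; simp
  set A := univ.filter (fun π : Perm (Fin (n+1)) => AvoidsTwoDashN1 hN π) with hA
  have hfib : A.card = ∑ j : Fin (n+1),
      (A.filter (fun π => π.symm (Fin.last n) = j)).card :=
    Finset.card_eq_sum_card_fiberwise (fun π _ => mem_univ _)
  have hlastfib : (A.filter (fun π => π.symm (Fin.last n) = Fin.last n)).card
      = n.factorial := by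
    rw [hA, Finset.filter_filter]
    have hiff : ∀ π : Perm (Fin (n+1)), π ∈ (univ : Finset (Perm (Fin (n+1)))) →
        ((AvoidsTwoDashN1 hN π ∧ π.symm (Fin.last n) = Fin.last n)
          ↔ π (Fin.last n) = Fin.last n) := by
      intro π _
      constructor
      · rintro ⟨_, h⟩
        rw [Equiv.symm_apply_eq] at h; exact h.symm
      · intro h
        refine ⟨?_, by rw [Equiv.symm_apply_eq, h]⟩
        intro j' k' h1 h2 i hi
        exfalso
        have hj' : j' = Fin.last n := π.injective (by rw [h1, htop, h])
        rw [hj'] at h2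
        have hk := k'.isLt
        simp only [Fin.val_last] at h2
        omega
    rw [Finset.filter_congr hiff]
    exact fiber_card_perm (Fin.last n) (Fin.last n)
  have hjfib : ∀ j : Fin (n+1), (j:ℕ) < n →
      (A.filter (fun π => π.symm (Fin.last n) = j)).card * ((j:ℕ)+1) = n.factorial := by
    intro j hj
    rw [hA, Finset.filter_filter]
    have hiff : ∀ π : Perm (Fin (n+1)), π ∈ (univ : Finset (Perm (Fin (n+1)))) →
        ((AvoidsTwoDashN1 hN π ∧ π.symm (Fin.last n) = j)
          ↔ (π j = Fin.last n ∧ ∀ i, i < j → π i < π ⟨(j:ℕ)+1, by omega⟩)) := by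
      intro π _
      constructor
      · rintro ⟨hAv, hs⟩
        rw [Equiv.symm_apply_eq] at hs
        refine ⟨hs.symm, ?_⟩
        intro i hi
        exact hAv j ⟨(j:ℕ)+1, by omega⟩ (by rw [htop, ← hs]) rfl i hi
      · rintro ⟨h1, h2⟩
        refine ⟨?_, by rw [Equiv.symm_apply_eq, h1]⟩
        intro j' k' ha hb i hi
        have hj' : j' = j := π.injective (by rw [ha, htop, h1])
        rw [hj'] at hb hi
        have hk' : k' = ⟨(j:ℕ)+1, by omega⟩ := Fin.ext hb
        rw [hk']
        exact h2 i hi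
    rw [Finset.filter_congr hiff]
    exact key_count j hj
  -- now pass to ℚ
  have hq : (A.card : ℚ) = ∑ j : Fin (n+1),
      ((A.filter (fun π => π.symm (Fin.last n) = j)).card : ℚ) := by
    rw [hfib]; push_cast; ring
  rw [hq, Fin.sum_univ_castSucc]
  have hcast : ∀ i : Fin n,
      ((A.filter (fun π => π.symm (Fin.last n) = i.castSucc)).card : ℚ)
        = (n.factorial : ℚ) / ((i:ℕ)+1) := by
    intro i
    have h := hjfib i.castSucc (by simp)
    have h2 : ((A.filter (fun π => π.symm (Fin.last n) = i.castSucc)).card : ℚ)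
        * (((i.castSucc : ℕ):ℚ)+1) = (n.factorial : ℚ) := by
      exact_mod_cast congrArg (Nat.cast : ℕ → ℚ) h
    have h3 : ((i.castSucc : ℕ) : ℚ) = ((i:ℕ) : ℚ) := by simp
    rw [h3] at h2
    have hne : ((i:ℕ):ℚ) + 1 ≠ 0 := by positivity
    field_simp at h2 ⊢
    linarith [h2]
  rw [Finset.sum_congr rfl (fun i _ => hcast i), hlastfib]
  have hsum1 : ∑ i : Fin n, (n.factorial : ℚ) / ((i:ℕ)+1)
      = ∑ t ∈ Finset.range n, (n.factorial : ℚ) / (t+1) := by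
    rw [Fin.sum_univ_eq_sum_range (fun t => (n.factorial : ℚ) / (t+1))]
  have hsum2 : ∑ i ∈ Finset.Icc 1 (n+1-1), (1:ℚ) / i
      = ∑ t ∈ Finset.range n, (1:ℚ) / (t+1) := by
    have : Finset.Icc 1 (n+1-1) = Finset.Ico 1 (n+1) := by
      rw [Finset.Ico_add_one_right_eq_Icc]; norm_num
    rw [this, Finset.sum_Ico_eq_sum_range]
    simp [add_comm]
  rw [hsum1, hsum2]
  have hfact : (((n+1) - 1).factorial : ℚ) = (n.factorial : ℚ) := by norm_num
  rw [hfact, mul_add, mul_one, Finset.mul_sum]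
  have hlast : ∑ t ∈ Finset.range n, (n.factorial:ℚ) * ((1:ℚ)/(↑t+1))
      = ∑ t ∈ Finset.range n, (n.factorial:ℚ)/(↑t+1) :=
    Finset.sum_congr rfl (fun t _ => by rw [mul_one_div])
  rw [hlast]
  ring
end
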